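/- arXiv:1408.6944 — 8 statements merged into one kernel-verified Lean document; each statement's English description precedes it below -/
import Mathlib

section
/- For all real numbers $x \ge y > 0$ and all $q \in (0,1)$, one has $(x+y)^q \le x^q + q y^q$. -/
/-!
By concavity of `t ↦ t ^ q`, the increment `(x + y) ^ q - x ^ q` is at most the tangent-line
increment `q * x ^ (q - 1) * y`, and for `y ≤ x` the negative exponent `q - 1` gives
`x ^ (q - 1) * y ≤ y ^ (q - 1) * y = y ^ q`.
-/

open Real

theorem Real.rpow_add_le_rpow_add_mul_rpow_sub_one_mul {x y p : ℝ} (hx : 0 < x) (hxy : -x ≤ y)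
    (hp0 : 0 ≤ p) (hp1 : p ≤ 1) :
    (x + y) ^ p ≤ x ^ p + p * x ^ (p - 1) * y := by
  have hs : -1 ≤ y / x := by rwa [le_div_iff₀ hx, neg_one_mul]
  have hsplit : x + y = x * (1 + y / x) := by field_simp
  calc (x + y) ^ p = x ^ p * (1 + y / x) ^ p := by
        rw [hsplit, mul_rpow hx.le (by linarith)]
    _ ≤ x ^ p * (1 + p * (y / x)) := by
        gcongr
        exact rpow_one_add_le_one_add_mul_self hs hp0 hp1
    _ = x ^ p + p * x ^ (p - 1) * y := by
        rw [rpow_sub_one hx.ne']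
        field_simp

theorem Real.rpow_sub_one_mul_le_rpow {x y p : ℝ} (hy : 0 < y) (hxy : y ≤ x) (hp : p ≤ 1) :
    x ^ (p - 1) * y ≤ y ^ p :=
  calc x ^ (p - 1) * y ≤ y ^ (p - 1) * y :=
        mul_le_mul_of_nonneg_right (rpow_le_rpow_of_nonpos hy hxy (by linarith)) hy.le
    _ = y ^ p := by rw [← rpow_add_one hy.ne', sub_add_cancel]

theorem stmt_0 (x y q : ℝ) (hy : 0 < y) (hxy : y ≤ x) (hq0 : 0 < q) (hq1 : q < 1) :
    (x + y) ^ q ≤ x ^ q + q * y ^ q := by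
  have hx : 0 < x := hy.trans_le hxy
  calc (x + y) ^ q ≤ x ^ q + q * (x ^ (q - 1) * y) := by
        rw [← mul_assoc]
        exact rpow_add_le_rpow_add_mul_rpow_sub_one_mul hx (by linarith) hq0.le hq1.le
    _ ≤ x ^ q + q * y ^ q := by
        gcongr
        exact rpow_sub_one_mul_le_rpow hy hxy hq1.le
end

section
/- For every $q \in (0,1]$ and every $x > 0$, $(x + x^{-1})^q \ge x^q + x^{-q} - 2(1-q)$. -/
/-!
The inequality is invariant under `x ↦ x⁻¹`, so assume `1 ≤ x` and put `u = x⁻¹`, `T = x + u`.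
Concavity of `t ↦ t ^ q` at `T` gives `x ^ q + q u T ^ (q - 1) ≤ T ^ q`, and `T ≤ 2x` together with
`q ≤ 2 ^ (q - 1)` gives `T ^ (q - 1) ≥ q x ^ (q - 1)`. It then remains to show
`b - 2(1 - q) ≤ q² u x ^ (q - 1)` for `b = x ^ (-q)`; since `b x ^ (q - 1) = u`, after multiplying
by `b` this follows from Bernoulli's bound `b ≤ (1 - q) + q u`.
-/

open Real

lemma rpow_le_tangent_line {q a b : ℝ} (hq0 : 0 ≤ q) (hq1 : q ≤ 1) (ha : 0 ≤ a) (hb : 0 < b) :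
    a ^ q ≤ b ^ q + q * b ^ (q - 1) * (a - b) := by
  have hbern : (a / b) ^ q ≤ 1 + q * (a / b - 1) := by
    simpa using rpow_one_add_le_one_add_mul_self (s := a / b - 1)
      (by linarith [div_nonneg ha hb.le]) hq0 hq1
  calc a ^ q = (a / b) ^ q * b ^ q := by
        rw [← mul_rpow (div_nonneg ha hb.le) hb.le, div_mul_cancel₀ _ hb.ne']
    _ ≤ (1 + q * (a / b - 1)) * b ^ q := by gcongr
    _ = b ^ q + q * b ^ (q - 1) * (a - b) := by
        rw [rpow_sub_one hb.ne']
        field_simp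

lemma le_two_rpow_sub_one {q : ℝ} (hq : q ≤ 1) : q ≤ (2 : ℝ) ^ (q - 1) := by
  have hlog : log 2 ≤ 1 := by linarith [log_le_sub_one_of_pos (x := 2) two_pos]
  calc q ≤ log 2 * (q - 1) + 1 := by nlinarith [log_pos one_lt_two]
    _ ≤ exp (log 2 * (q - 1)) := add_one_le_exp _
    _ = (2 : ℝ) ^ (q - 1) := (rpow_def_of_pos two_pos _).symm

lemma sub_two_mul_le_sq_div {b c w : ℝ} (hb : 0 < b) (hc : 0 ≤ c) (hw : 0 ≤ w)
    (hbw : b ≤ c + w) : b - 2 * c ≤ w ^ 2 / b := by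
  rw [le_div_iff₀ hb]
  rcases le_total c b with hcb | hbc <;> nlinarith

lemma rpow_add_rpow_neg_sub_le_of_one_le {q x : ℝ} (hq0 : 0 < q) (hq1 : q ≤ 1) (hx : 1 ≤ x) :
    x ^ q + x ^ (-q) - 2 * (1 - q) ≤ (x + x⁻¹) ^ q := by
  have hx0 : 0 < x := one_pos.trans_le hx
  set u := x⁻¹ with hu
  set T := x + u
  have hu0 : 0 < u := inv_pos.mpr hx0
  have hT0 : 0 < T := by positivity
  have htangent : x ^ q + q * u * T ^ (q - 1) ≤ T ^ q := by
    have := rpow_le_tangent_line hq0.le hq1 hx0.le hT0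
    have hxT : x - T = -u := by ring
    rw [hxT] at this
    linarith
  have hT_le : T ≤ 2 * x := by linarith [inv_le_one_of_one_le₀ hx]
  have hT_pow : q * x ^ (q - 1) ≤ T ^ (q - 1) :=
    calc q * x ^ (q - 1) ≤ 2 ^ (q - 1) * x ^ (q - 1) := by
          gcongr; exact le_two_rpow_sub_one hq1
      _ = (2 * x) ^ (q - 1) := (mul_rpow zero_le_two hx0.le).symm
      _ ≤ T ^ (q - 1) := rpow_le_rpow_of_nonpos hT0 hT_le (by linarith)
  have hbern : x ^ (-q) ≤ (1 - q) + q * u := by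
    have := rpow_le_tangent_line hq0.le hq1 hu0.le one_pos
    rw [hu, inv_rpow hx0.le, ← rpow_neg hx0.le, one_rpow, one_rpow] at this
    linarith
  have hprod : x ^ (-q) * x ^ (q - 1) = u := by
    rw [← rpow_add hx0, show -q + (q - 1) = -1 by ring, rpow_neg_one]
  have hb0 : 0 < x ^ (-q) := rpow_pos_of_pos hx0 _
  calc x ^ q + x ^ (-q) - 2 * (1 - q)
      ≤ x ^ q + (q * u) ^ 2 / x ^ (-q) := by
        linarith [sub_two_mul_le_sq_div hb0 (by linarith) (by positivity) hbern]
    _ = x ^ q + q * u * (q * x ^ (q - 1)) := by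
        rw [← hprod]; field_simp
    _ ≤ x ^ q + q * u * T ^ (q - 1) := by gcongr
    _ ≤ T ^ q := htangent

theorem stmt_3 (q x : ℝ) (hq0 : 0 < q) (hq1 : q ≤ 1) (hx : 0 < x) :
    x ^ q + x ^ (-q) - 2 * (1 - q) ≤ (x + x⁻¹) ^ q := by
  rcases le_total 1 x with h | h
  · exact rpow_add_rpow_neg_sub_le_of_one_le hq0 hq1 h
  · have := rpow_add_rpow_neg_sub_le_of_one_le hq0 hq1 ((one_le_inv₀ hx).mpr h)
    simp only [inv_rpow hx.le, ← rpow_neg hx.le, neg_neg, inv_inv, add_comm x⁻¹ x] at this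
    linarith
end

section
/- Let $\ell \ge 1$ and $x_1, \dots, x_\ell \ge 0$, and let $0 < q \le 1$. Then $\left(\sum_{j=1}^\ell x_j\right)^q \ge \sum_{j=1}^\ell x_j^q - 2(1-q) \sum_{1 \le i < j \le \ell} (x_i x_j)^{q/2}$. -/
open Real Finset

/-- Two-variable subadditivity of `rpow` for exponents in `(0,1]`. -/
private lemma two_subadd {p : ℝ} (hp0 : 0 < p) (hp1 : p ≤ 1) {a b : ℝ}
    (ha : 0 ≤ a) (hb : 0 ≤ b) : (a + b) ^ p ≤ a ^ p + b ^ p := by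
  have h := NNReal.rpow_add_le_add_rpow a.toNNReal b.toNNReal hp0.le hp1
  rw [← NNReal.coe_le_coe] at h
  push_cast at h
  rwa [Real.coe_toNNReal a ha, Real.coe_toNNReal b hb] at h

private lemma sum_subadd {p : ℝ} (hp0 : 0 < p) (hp1 : p ≤ 1)
    {ι : Type*} (s : Finset ι) (x : ι → ℝ) (hx : ∀ i, 0 ≤ x i) :
    (∑ i ∈ s, x i) ^ p ≤ ∑ i ∈ s, x i ^ p := by
  classical
  induction s using Finset.induction_on with
  | empty => simp [Real.zero_rpow hp0.ne']
  | @insert a s hnotin ih =>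
    rw [Finset.sum_insert hnotin, Finset.sum_insert hnotin]
    calc (x a + ∑ i ∈ s, x i) ^ p ≤ x a ^ p + (∑ i ∈ s, x i) ^ p :=
          two_subadd hp0 hp1 (hx a) (Finset.sum_nonneg fun i _ => hx i)
      _ ≤ x a ^ p + ∑ i ∈ s, x i ^ p := by linarith

private lemma const_ineq {q : ℝ} (hq0 : 0 < q) (hq1 : q < 1) :
    (2 : ℝ) ^ (q * (1 - q) / (2 - q)) ≤ 2 - q := by
  have h2q : (0:ℝ) < 2 - q := by linarith
  have hlog : (1 - q) / (2 - q) ≤ Real.log (2 - q) := by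
    have h := Real.one_sub_inv_le_log_of_pos h2q
    have heq : 1 - (2 - q)⁻¹ = (1 - q) / (2 - q) := by field_simp; ring
    rw [heq] at h; exact h
  have hlog2 : Real.log 2 ≤ 1 := by
    have := Real.log_le_sub_one_of_pos (by norm_num : (0:ℝ) < 2); linarith
  have hlog2' : 0 ≤ Real.log 2 := Real.log_nonneg (by norm_num)
  have h2 : Real.log 2 * q ≤ 1 := by nlinarith
  have h3 : 0 ≤ (1 - q) / (2 - q) := div_nonneg (by linarith) (by linarith)
  have hmain : Real.log 2 * (q * (1 - q) / (2 - q)) ≤ Real.log (2 - q) := by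
    calc Real.log 2 * (q * (1 - q) / (2 - q)) = (Real.log 2 * q) * ((1 - q) / (2 - q)) := by ring
      _ ≤ 1 * ((1 - q) / (2 - q)) := mul_le_mul_of_nonneg_right h2 h3
      _ = (1 - q) / (2 - q) := one_mul _
      _ ≤ Real.log (2 - q) := hlog
  calc (2:ℝ) ^ (q * (1 - q) / (2 - q))
      = Real.exp (Real.log 2 * (q * (1 - q) / (2 - q))) :=
        Real.rpow_def_of_pos (by norm_num) _
    _ ≤ Real.exp (Real.log (2 - q)) := Real.exp_le_exp.mpr hmain
    _ = 2 - q := Real.exp_log h2q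

/-- key scalar step: `b ^ q ≤ q * b * (2a)^(q-1) + 2(1-q) (ab)^(q/2)` for `0 < b ≤ a`. -/
private lemma step3 {q : ℝ} (hq0 : 0 < q) (hq1 : q < 1) {a b : ℝ}
    (hb : 0 < b) (hba : b ≤ a) :
    b ^ q ≤ q * b * (2 * a) ^ (q - 1) + 2 * (1 - q) * (a * b) ^ (q / 2) := by
  have ha : 0 < a := lt_of_lt_of_le hb hba
  have h2a : (0:ℝ) < 2 * a := by linarith
  rcases le_or_gt q (1/2) with hq2 | hq2
  · -- easy case: 2*(1-q) ≥ 1 and (ab)^(q/2) ≥ b^q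
    have h1 : b ^ q = (b * b) ^ (q / 2) := by
      rw [Real.mul_rpow hb.le hb.le, ← Real.rpow_add hb]
      norm_num
    have h2 : (b * b) ^ (q / 2) ≤ (a * b) ^ (q / 2) :=
      Real.rpow_le_rpow (by positivity) (by nlinarith) (by linarith)
    have h3 : (0:ℝ) ≤ q * b * (2 * a) ^ (q - 1) :=
      mul_nonneg (mul_nonneg hq0.le hb.le) (Real.rpow_pos_of_pos h2a _).le
    have h4 : (0:ℝ) ≤ (a * b) ^ (q / 2) := (Real.rpow_pos_of_pos (mul_pos ha hb) _).le
    nlinarith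
  · -- hard case: weighted AM-GM
    have h2q : (0:ℝ) < 2 - q := by linarith
    set w₁ : ℝ := q / (2 - q) with hw₁def
    set w₂ : ℝ := (2 - 2 * q) / (2 - q) with hw₂def
    have hw₁ : 0 < w₁ := div_pos hq0 h2q
    have hw₂ : 0 < w₂ := by
      apply div_pos <;> linarith
    have hw : w₁ + w₂ = 1 := by rw [hw₁def, hw₂def]; field_simp; ring
    set X : ℝ := (2 - q) * (b * (2 * a) ^ (q - 1)) with hXdef
    set Y : ℝ := (2 - q) * ((a * b) ^ (q / 2)) with hYdef
    have hXpos : 0 < X :=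
      mul_pos h2q (mul_pos hb (Real.rpow_pos_of_pos h2a _))
    have hYpos : 0 < Y :=
      mul_pos h2q (Real.rpow_pos_of_pos (mul_pos ha hb) _)
    have amgm := Real.geom_mean_le_arith_mean2_weighted hw₁.le hw₂.le hXpos.le hYpos.le hw
    have hsum : w₁ * X + w₂ * Y = q * b * (2 * a) ^ (q - 1) + 2 * (1 - q) * (a * b) ^ (q / 2) := by
      rw [hXdef, hYdef, hw₁def, hw₂def]
      field_simp
    -- now show b ^ q ≤ X ^ w₁ * Y ^ w₂ via logs
    have hbq : b ^ q = Real.exp (Real.log b * q) := Real.rpow_def_of_pos hb q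
    have hXY : X ^ w₁ * Y ^ w₂ = Real.exp (Real.log X * w₁ + Real.log Y * w₂) := by
      rw [Real.rpow_def_of_pos hXpos, Real.rpow_def_of_pos hYpos, ← Real.exp_add]
    have hlogX : Real.log X = Real.log (2 - q) + (Real.log b + (q - 1) * (Real.log 2 + Real.log a)) := by
      rw [hXdef, Real.log_mul h2q.ne' (mul_pos hb (Real.rpow_pos_of_pos h2a _)).ne',
        Real.log_mul hb.ne' (Real.rpow_pos_of_pos h2a _).ne', Real.log_rpow h2a,
        Real.log_mul (by norm_num) ha.ne']
    have hlogY : Real.log Y = Real.log (2 - q) + (q / 2) * (Real.log a + Real.log b) := by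
      rw [hYdef, Real.log_mul h2q.ne' (Real.rpow_pos_of_pos (mul_pos ha hb) _).ne',
        Real.log_rpow (mul_pos ha hb), Real.log_mul ha.ne' hb.ne']
    have hconst : q * (1 - q) / (2 - q) * Real.log 2 ≤ Real.log (2 - q) := by
      have h := const_ineq hq0 hq1
      have h2 : (2:ℝ) ^ (q * (1 - q) / (2 - q)) = Real.exp (Real.log 2 * (q * (1 - q) / (2 - q))) :=
        Real.rpow_def_of_pos (by norm_num) _
      rw [h2] at h
      have := Real.log_le_log (Real.exp_pos _) h
      rw [Real.log_exp] at this
      linarith [this]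
    have hexp : Real.log b * q ≤ Real.log X * w₁ + Real.log Y * w₂ := by
      rw [hlogX, hlogY]
      have hRHS : (Real.log (2 - q) + (Real.log b + (q - 1) * (Real.log 2 + Real.log a))) * w₁
          + (Real.log (2 - q) + (q / 2) * (Real.log a + Real.log b)) * w₂
          = Real.log (2 - q) - (q * (1 - q) / (2 - q)) * Real.log 2 + Real.log b * q := by
        rw [hw₁def, hw₂def]
        field_simp
        ring
      rw [hRHS]
      linarith [hconst]
    calc b ^ q = Real.exp (Real.log b * q) := hbq
      _ ≤ Real.exp (Real.log X * w₁ + Real.log Y * w₂) := Real.exp_le_exp.mpr hexp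
      _ = X ^ w₁ * Y ^ w₂ := hXY.symm
      _ ≤ w₁ * X + w₂ * Y := amgm
      _ = _ := hsum

/-- key two-variable inequality, assuming `b ≤ a`. -/
private lemma keyB' {q : ℝ} (hq0 : 0 < q) (hq1 : q ≤ 1) {a b : ℝ}
    (ha : 0 ≤ a) (hb : 0 ≤ b) (hba : b ≤ a) :
    a ^ q + b ^ q - 2 * (1 - q) * (a * b) ^ (q / 2) ≤ (a + b) ^ q := by
  rcases eq_or_lt_of_le hq1 with rfl | hq1'
  · simp [Real.rpow_one]
  rcases hb.eq_or_lt with rfl | hb'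
  · simp [Real.zero_rpow hq0.ne', Real.zero_rpow (ne_of_gt (by linarith : (0:ℝ) < q / 2))]
  have ha' : 0 < a := lt_of_lt_of_le hb' hba
  have hab : (0:ℝ) < a + b := by linarith
  -- Step 1 : a^q ≤ (a+b)^q - q*b*(a+b)^(q-1)
  have amgm1 := Real.geom_mean_le_arith_mean2_weighted hq0.le (by linarith : (0:ℝ) ≤ 1 - q)
    (div_nonneg ha hab.le) zero_le_one (by ring : q + (1 - q) = 1)
  rw [Real.one_rpow, mul_one, mul_one, Real.div_rpow ha hab.le] at amgm1
  have hpow : (0:ℝ) < (a + b) ^ q := Real.rpow_pos_of_pos hab q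
  have step1 : a ^ q ≤ (a + b) ^ q - q * b * (a + b) ^ (q - 1) := by
    have h1 : a ^ q ≤ (q * (a / (a + b)) + (1 - q)) * (a + b) ^ q := by
      rw [div_le_iff₀ hpow] at amgm1
      linarith [amgm1]
    have h2 : (q * (a / (a + b)) + (1 - q)) * (a + b) ^ q
        = (a + b) ^ q - q * b * (a + b) ^ (q - 1) := by
      rw [Real.rpow_sub_one hab.ne' q]
      field_simp
      ring
    linarith [h1, h2.symm.le]
  -- Step 2 : (2a)^(q-1) ≤ (a+b)^(q-1)
  have step2 : (2 * a) ^ (q - 1) ≤ (a + b) ^ (q - 1) :=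
    Real.rpow_le_rpow_of_nonpos hab (by linarith) (by linarith)
  have hs3 := step3 hq0 hq1' hb' hba
  have hmul : q * b * (2 * a) ^ (q - 1) ≤ q * b * (a + b) ^ (q - 1) := by
    exact mul_le_mul_of_nonneg_left step2 (mul_nonneg hq0.le hb)
  linarith [hs3, hmul, step1]

/-- key two-variable inequality. -/
private lemma keyB {q : ℝ} (hq0 : 0 < q) (hq1 : q ≤ 1) {a b : ℝ}
    (ha : 0 ≤ a) (hb : 0 ≤ b) :
    a ^ q + b ^ q - 2 * (1 - q) * (a * b) ^ (q / 2) ≤ (a + b) ^ q := by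
  rcases le_total b a with h | h
  · exact keyB' hq0 hq1 ha hb h
  · have := keyB' hq0 hq1 hb ha h
    rw [mul_comm b a, add_comm b a] at this
    linarith

/-- main inequality, Finset version with ordered distinct pairs. -/
private lemma main_finset {q : ℝ} (hq0 : 0 < q) (hq1 : q ≤ 1)
    {ι : Type*} [DecidableEq ι] (s : Finset ι) (x : ι → ℝ) (hx : ∀ i, 0 ≤ x i) :
    ∑ i ∈ s, x i ^ q
      ≤ (∑ i ∈ s, x i) ^ q + (1 - q) * ∑ i ∈ s, ∑ j ∈ s.erase i, (x i * x j) ^ (q / 2) := by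
  induction s using Finset.induction_on with
  | empty => simp [Real.zero_rpow hq0.ne']
  | @insert a s hnotin ih =>
    have hq' : (0:ℝ) ≤ 1 - q := by linarith
    set A := x a with hA
    set S := ∑ i ∈ s, x i with hS
    have hSnn : 0 ≤ S := Finset.sum_nonneg fun i _ => hx i
    have hD : ∑ i ∈ insert a s, ∑ j ∈ (insert a s).erase i, (x i * x j) ^ (q / 2)
        = 2 * ∑ j ∈ s, (A * x j) ^ (q / 2)
          + ∑ i ∈ s, ∑ j ∈ s.erase i, (x i * x j) ^ (q / 2) := by
      rw [Finset.sum_insert hnotin, Finset.erase_insert hnotin]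
      have hinner : ∀ i ∈ s, ∑ j ∈ (insert a s).erase i, (x i * x j) ^ (q / 2)
          = (A * x i) ^ (q / 2) + ∑ j ∈ s.erase i, (x i * x j) ^ (q / 2) := by
        intro i hi
        have hne : a ≠ i := by rintro rfl; exact hnotin hi
        rw [Finset.erase_insert_of_ne hne, Finset.sum_insert (by simp [hnotin])]
        rw [mul_comm (x i) A]
      rw [Finset.sum_congr rfl hinner, Finset.sum_add_distrib]
      ring
    have hkey := keyB hq0 hq1 (hx a) hSnn
    have hAS : (A * S) ^ (q / 2) ≤ ∑ j ∈ s, (A * x j) ^ (q / 2) := by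
      have h1 : (A * S) ^ (q / 2) = A ^ (q / 2) * S ^ (q / 2) :=
        Real.mul_rpow (hx a) hSnn
      have h2 : S ^ (q / 2) ≤ ∑ j ∈ s, x j ^ (q / 2) :=
        sum_subadd (by linarith) (by linarith) s x hx
      have h3 : A ^ (q / 2) * S ^ (q / 2) ≤ A ^ (q / 2) * ∑ j ∈ s, x j ^ (q / 2) :=
        mul_le_mul_of_nonneg_left h2 (Real.rpow_nonneg (hx a) _)
      have h4 : A ^ (q / 2) * ∑ j ∈ s, x j ^ (q / 2) = ∑ j ∈ s, (A * x j) ^ (q / 2) := by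
        rw [Finset.mul_sum]
        exact Finset.sum_congr rfl fun j _ => (Real.mul_rpow (hx a) (hx j)).symm
      linarith [h1.le, h3, h4.le]
    have hASmul : 2 * (1 - q) * (A * S) ^ (q / 2) ≤ 2 * (1 - q) * ∑ j ∈ s, (A * x j) ^ (q / 2) :=
      mul_le_mul_of_nonneg_left hAS (by linarith)
    rw [Finset.sum_insert hnotin, Finset.sum_insert hnotin, hD]
    have : A ^ q + ∑ i ∈ s, x i ^ q ≤ A ^ q + S ^ q + (1 - q) * ∑ i ∈ s, ∑ j ∈ s.erase i, (x i * x j) ^ (q / 2) := by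
      linarith [ih]
    calc A ^ q + ∑ i ∈ s, x i ^ q
        ≤ A ^ q + S ^ q + (1 - q) * ∑ i ∈ s, ∑ j ∈ s.erase i, (x i * x j) ^ (q / 2) := this
      _ ≤ (A + S) ^ q + 2 * (1 - q) * (A * S) ^ (q / 2)
            + (1 - q) * ∑ i ∈ s, ∑ j ∈ s.erase i, (x i * x j) ^ (q / 2) := by linarith [hkey]
      _ ≤ (A + S) ^ q + (1 - q) * (2 * ∑ j ∈ s, (A * x j) ^ (q / 2)
            + ∑ i ∈ s, ∑ j ∈ s.erase i, (x i * x j) ^ (q / 2)) := by linarith [hASmul]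

theorem stmt_4 (ℓ : ℕ) (hℓ : 1 ≤ ℓ) (x : Fin ℓ → ℝ) (hx : ∀ j, 0 ≤ x j)
    (q : ℝ) (hq0 : 0 < q) (hq1 : q ≤ 1) :
    (∑ j, x j ^ q) - 2 * (1 - q) *
        ∑ p ∈ Finset.univ.filter (fun p : Fin ℓ × Fin ℓ => p.1 < p.2), (x p.1 * x p.2) ^ (q / 2)
      ≤ (∑ j, x j) ^ q := by
  classical
  have hM := main_finset hq0 hq1 Finset.univ x hx
  set f : Fin ℓ → Fin ℓ → ℝ := fun i j => (x i * x j) ^ (q / 2) with hf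
  have hD : ∑ i, ∑ j ∈ Finset.univ.erase i, f i j
      = 2 * ∑ p ∈ Finset.univ.filter (fun p : Fin ℓ × Fin ℓ => p.1 < p.2), f p.1 p.2 := by
    have hlt : ∑ p ∈ Finset.univ.filter (fun p : Fin ℓ × Fin ℓ => p.1 < p.2), f p.1 p.2
        = ∑ i, ∑ j, if i < j then f i j else 0 := by
      rw [Finset.sum_filter, Fintype.sum_prod_type]
    have hgt : ∑ p ∈ Finset.univ.filter (fun p : Fin ℓ × Fin ℓ => p.2 < p.1), f p.1 p.2
        = ∑ i, ∑ j, if j < i then f i j else 0 := by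
      rw [Finset.sum_filter, Fintype.sum_prod_type]
    have hswap : ∑ p ∈ Finset.univ.filter (fun p : Fin ℓ × Fin ℓ => p.2 < p.1), f p.1 p.2
        = ∑ p ∈ Finset.univ.filter (fun p : Fin ℓ × Fin ℓ => p.1 < p.2), f p.1 p.2 := by
      apply Finset.sum_nbij' (fun p : Fin ℓ × Fin ℓ => (p.2, p.1))
        (fun p : Fin ℓ × Fin ℓ => (p.2, p.1))
      · intro p hp; simp at hp ⊢; exact hp
      · intro p hp; simp at hp ⊢; exact hp
      · intro p _; rfl
      · intro p _; rfl
      · intro p _; simp [hf, mul_comm]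
    have hkey : ∀ i j : Fin ℓ, (if j ≠ i then f i j else 0)
        = (if i < j then f i j else 0) + (if j < i then f i j else 0) := by
      intro i j
      rcases lt_trichotomy i j with h | h | h
      · simp [h, h.ne', asymm h]
      · simp [h]
      · simp [h, h.ne, asymm h]
    calc ∑ i, ∑ j ∈ Finset.univ.erase i, f i j
        = ∑ i : Fin ℓ, ∑ j, if j ≠ i then f i j else 0 := by
          refine Finset.sum_congr rfl fun i _ => ?_
          rw [← Finset.filter_ne', Finset.sum_filter]
      _ = ∑ i : Fin ℓ, ∑ j, ((if i < j then f i j else 0) + (if j < i then f i j else 0)) := by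
          refine Finset.sum_congr rfl fun i _ => Finset.sum_congr rfl fun j _ => hkey i j
      _ = (∑ i, ∑ j, if i < j then f i j else 0) + ∑ i, ∑ j, if j < i then f i j else 0 := by
          rw [← Finset.sum_add_distrib]
          exact Finset.sum_congr rfl fun i _ => Finset.sum_add_distrib
      _ = 2 * ∑ p ∈ Finset.univ.filter (fun p : Fin ℓ × Fin ℓ => p.1 < p.2), f p.1 p.2 := by
          rw [← hlt, ← hgt, hswap]; ring
  rw [hD] at hM
  linarith [hM]
end

section
/- For $q \in (0,1]$, the function $\varphi(x) = x^q + x^{-q} - (x + x^{-1})^q$ on $(0,\infty)$ satisfies $\varphi(x) = \varphi(x^{-1})$ for all $x > 0$, and attains its maximum at $x = 1$, where $\varphi(1) = 2 - 2^q \le 2\ln 2 \,(1-q)$. -/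
/-!
By the symmetry `x ↦ x⁻¹` it suffices to treat `x ≥ 1`. With `u = x⁻²`, the derivative of `φ`
there is `q x^(q-1) (1 - u^q - (1 - u)(1 + u)^(q-1))`. It is nonpositive because the tangent-line
bounds `u^(q-1) ≥ 1 + (q-1)(u-1)` and `(1+u)^(q-1) ≥ 1 + (q-1)u` of the convex function
`t ↦ t^(q-1)` add up to exactly `1 - u^q ≤ (1 - u)(1 + u)^(q-1)`. Hence `φ` decreases on `[1, ∞)`.
The bound on `2 - 2^q` is `2^(q-1) = exp((q-1) ln 2) ≥ 1 + (q-1) ln 2`.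
-/

open Real Set

theorem one_add_mul_log_le_rpow (p : ℝ) {y : ℝ} (hy : 0 < y) : 1 + p * log y ≤ y ^ p := by
  rw [rpow_def_of_pos hy, mul_comm (log y)]
  linarith [add_one_le_exp (p * log y)]

theorem one_add_mul_sub_one_le_rpow_of_nonpos {p y : ℝ} (hp : p ≤ 0) (hy : 0 < y) :
    1 + p * (y - 1) ≤ y ^ p := by
  nlinarith [one_add_mul_log_le_rpow p hy, log_le_sub_one_of_pos hy]

theorem one_sub_rpow_le_mul_one_add_rpow {q u : ℝ} (hq : q ≤ 1) (hu0 : 0 < u) (hu1 : u ≤ 1) :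
    1 - u ^ q ≤ (1 - u) * (1 + u) ^ (q - 1) := by
  have hp : q - 1 ≤ 0 := by linarith
  have hu : u * (1 + (q - 1) * (u - 1)) ≤ u ^ q := by
    rw [show u ^ q = u * u ^ (q - 1) by rw [mul_comm, ← rpow_add_one hu0.ne']; ring_nf]
    exact mul_le_mul_of_nonneg_left (one_add_mul_sub_one_le_rpow_of_nonpos hp hu0) hu0.le
  have hv : 1 + (q - 1) * u ≤ (1 + u) ^ (q - 1) := by
    simpa using one_add_mul_sub_one_le_rpow_of_nonpos hp (by linarith : 0 < 1 + u)
  nlinarith [mul_le_mul_of_nonneg_left hv (by linarith : 0 ≤ 1 - u)]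

noncomputable def phi (q x : ℝ) : ℝ := x ^ q + x ^ (-q) - (x + x⁻¹) ^ q

theorem phi_inv (q : ℝ) {x : ℝ} (hx : 0 < x) : phi q x⁻¹ = phi q x := by
  simp only [phi, inv_rpow hx.le, rpow_neg hx.le, inv_inv, add_comm x⁻¹ x]
  ring

theorem phi_one (q : ℝ) : phi q 1 = 2 - 2 ^ q := by
  norm_num [phi]

noncomputable def phiDeriv (q x : ℝ) : ℝ :=
  q * (x ^ (q - 1) - x ^ (-q - 1) - (x + x⁻¹) ^ (q - 1) * (1 - (x ^ 2)⁻¹))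

theorem hasDerivAt_phi (q : ℝ) {x : ℝ} (hx : 0 < x) : HasDerivAt (phi q) (phiDeriv q x) x := by
  have hs : HasDerivAt (fun y : ℝ => y + y⁻¹) (1 + -(x ^ 2)⁻¹) x :=
    (hasDerivAt_id' x).add (hasDerivAt_inv hx.ne')
  have hphi : HasDerivAt (fun y : ℝ => y ^ q + y ^ (-q) - (y + y⁻¹) ^ q)
      (q * x ^ (q - 1) + -q * x ^ (-q - 1) - (1 + -(x ^ 2)⁻¹) * q * (x + x⁻¹) ^ (q - 1)) x :=
    ((hasDerivAt_rpow_const (Or.inl hx.ne')).add (hasDerivAt_rpow_const (Or.inl hx.ne'))).sub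
      (hs.rpow_const (Or.inl (by positivity)))
  exact hphi.congr_deriv (by rw [phiDeriv]; ring)

theorem phiDeriv_nonpos {q x : ℝ} (hq0 : 0 ≤ q) (hq1 : q ≤ 1) (hx : 1 ≤ x) :
    phiDeriv q x ≤ 0 := by
  have hx0 : 0 < x := by linarith
  set u := (x ^ 2)⁻¹ with hu
  have hu0 : 0 < u := by positivity
  have hu1 : u ≤ 1 := inv_le_one_of_one_le₀ (by nlinarith)
  have hsum : (x + x⁻¹) ^ (q - 1) = x ^ (q - 1) * (1 + u) ^ (q - 1) := by
    rw [← mul_rpow hx0.le (by positivity)]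
    congr 1
    rw [hu]
    field_simp
  have hneg : x ^ (-q - 1) = x ^ (q - 1) * u ^ q := by
    rw [hu, ← rpow_natCast, ← rpow_neg hx0.le, ← rpow_mul hx0.le, ← rpow_add hx0]
    norm_num
    ring_nf
  have hkey := one_sub_rpow_le_mul_one_add_rpow hq1 hu0 hu1
  calc phiDeriv q x = q * (x ^ (q - 1) * (1 - u ^ q - (1 - u) * (1 + u) ^ (q - 1))) := by
        rw [phiDeriv, hsum, hneg]; ring
    _ ≤ 0 := mul_nonpos_of_nonneg_of_nonpos hq0
        (mul_nonpos_of_nonneg_of_nonpos (by positivity) (by linarith))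

theorem antitoneOn_phi {q : ℝ} (hq0 : 0 ≤ q) (hq1 : q ≤ 1) : AntitoneOn (phi q) (Ici 1) := by
  refine antitoneOn_of_hasDerivWithinAt_nonpos (f' := phiDeriv q) (convex_Ici 1)
    (fun x hx => (hasDerivAt_phi q (zero_lt_one.trans_le hx)).continuousAt.continuousWithinAt)
    (fun x hx => ?_) (fun x hx => ?_) <;> rw [interior_Ici] at hx
  · exact (hasDerivAt_phi q (zero_lt_one.trans hx)).hasDerivWithinAt
  · exact phiDeriv_nonpos hq0 hq1 hx.le

theorem phi_le_phi_one {q x : ℝ} (hq0 : 0 ≤ q) (hq1 : q ≤ 1) (hx : 0 < x) :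
    phi q x ≤ phi q 1 := by
  rcases le_total 1 x with h | h
  · exact antitoneOn_phi hq0 hq1 self_mem_Ici h h
  · rw [← phi_inv q hx]
    have h' : 1 ≤ x⁻¹ := (one_le_inv₀ hx).2 h
    exact antitoneOn_phi hq0 hq1 self_mem_Ici h' h'

theorem two_sub_two_rpow_le (q : ℝ) : 2 - 2 ^ q ≤ 2 * log 2 * (1 - q) := by
  have h : (2 : ℝ) ^ q = 2 * 2 ^ (q - 1) := by
    rw [rpow_sub two_pos, rpow_one]
    ring
  nlinarith [one_add_mul_log_le_rpow (q - 1) two_pos]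

theorem stmt_5 (q : ℝ) (hq0 : 0 < q) (hq1 : q ≤ 1) :
    (∀ x : ℝ, 0 < x →
        (x ^ q + x ^ (-q) - (x + x⁻¹) ^ q) = (x⁻¹ ^ q + x⁻¹ ^ (-q) - (x⁻¹ + x⁻¹⁻¹) ^ q)) ∧
    (∀ x : ℝ, 0 < x →
        x ^ q + x ^ (-q) - (x + x⁻¹) ^ q ≤ (1 : ℝ) ^ q + (1 : ℝ) ^ (-q) - ((1 : ℝ) + 1⁻¹) ^ q) ∧
    ((1 : ℝ) ^ q + (1 : ℝ) ^ (-q) - ((1 : ℝ) + 1⁻¹) ^ q = 2 - 2 ^ q) ∧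
    (2 - (2 : ℝ) ^ q ≤ 2 * Real.log 2 * (1 - q)) :=
  ⟨fun _ hx => (phi_inv q hx).symm, fun _ hx => phi_le_phi_one hq0.le hq1 hx, phi_one q,
    two_sub_two_rpow_le q⟩
end

section
/- Let $X$ and $X'$ be nonnegative i.i.d. random variables, with $X$ integrable and $E[X]>0$. Then there exists $\delta > 0$ such that for every $q \in [0,1]$, $E[X^q \mathbf{1}_{\{X' \ge X\}}] \ge \delta\, E[X^q]$. -/
open MeasureTheory ProbabilityTheory

private lemma rpow_le_add_one {a q : ℝ} (ha : 0 ≤ a) (hq0 : 0 ≤ q) (hq1 : q ≤ 1) :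
    a ^ q ≤ a + 1 := by
  rcases le_or_gt a 1 with h | h
  · calc a ^ q ≤ 1 := Real.rpow_le_one ha h hq0
    _ ≤ a + 1 := by linarith
  · calc a ^ q ≤ a ^ (1 : ℝ) := Real.rpow_le_rpow_of_exponent_le h.le hq1
    _ = a := Real.rpow_one a
    _ ≤ a + 1 := by linarith

private lemma min_le_rpow {a q : ℝ} (ha : 0 ≤ a) (hq0 : 0 ≤ q) (hq1 : q ≤ 1) :
    min a 1 ≤ a ^ q := by
  rcases le_or_gt 1 a with h | h
  · rw [min_eq_right h]
    calc (1 : ℝ) = a ^ (0 : ℝ) := (Real.rpow_zero a).symm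
    _ ≤ a ^ q := Real.rpow_le_rpow_of_exponent_le h hq0
  · rw [min_eq_left h.le]
    rcases eq_or_lt_of_le ha with h0 | h0
    · rw [← h0]
      exact Real.rpow_nonneg le_rfl q
    · calc a = a ^ (1 : ℝ) := (Real.rpow_one a).symm
      _ ≤ a ^ q := Real.rpow_le_rpow_of_exponent_ge h0 h.le hq1

private lemma F_of_le {q a b : ℝ} (h : a ≤ b) :
    Set.indicator {p : ℝ × ℝ | p.1 ≤ p.2} (fun p => p.1 ^ q) (a, b) = a ^ q :=
  Set.indicator_of_mem (show (a, b) ∈ {p : ℝ × ℝ | p.1 ≤ p.2} from h) _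

private lemma F_of_not_le {q a b : ℝ} (h : ¬ a ≤ b) :
    Set.indicator {p : ℝ × ℝ | p.1 ≤ p.2} (fun p => p.1 ^ q) (a, b) = 0 :=
  Set.indicator_of_notMem (show (a, b) ∉ {p : ℝ × ℝ | p.1 ≤ p.2} from h) _

theorem stmt_6 {Ω : Type*} [MeasurableSpace Ω] (μ : Measure Ω) [IsProbabilityMeasure μ]
    (X X' : Ω → ℝ) (hXm : Measurable X) (hX'm : Measurable X')
    (hXnn : ∀ ω, 0 ≤ X ω) (hind : IndepFun X X' μ) (hid : IdentDistrib X X' μ μ)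
    (hint : Integrable X μ) (hpos : 0 < ∫ ω, X ω ∂μ) :
    ∃ δ > 0, ∀ q ∈ Set.Icc (0 : ℝ) 1,
      δ * ∫ ω, X ω ^ q ∂μ ≤ ∫ ω in {ω | X ω ≤ X' ω}, X ω ^ q ∂μ := by
  -- X' is nonnegative a.e.
  have hX'nn : ∀ᵐ ω ∂μ, 0 ≤ X' ω := by
    have h1 : μ (X' ⁻¹' Set.Iio 0) = 0 := by
      rw [← hid.measure_mem_eq measurableSet_Iio]
      have hE : X ⁻¹' Set.Iio (0 : ℝ) = ∅ := by
        ext ω; simp [not_lt.mpr (hXnn ω)]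
      simp [hE]
    rw [ae_iff]
    convert h1 using 2
    ext ω; simp [Set.mem_preimage, not_le]
  -- exchangeability of the pair
  have hpair : IdentDistrib (fun ω => (X ω, X' ω)) (fun ω => (X' ω, X ω)) μ μ := by
    refine ⟨(hXm.prodMk hX'm).aemeasurable, (hX'm.prodMk hXm).aemeasurable, ?_⟩
    rw [(indepFun_iff_map_prod_eq_prod_map_map hXm.aemeasurable hX'm.aemeasurable).mp hind,
      (indepFun_iff_map_prod_eq_prod_map_map hX'm.aemeasurable hXm.aemeasurable).mp hind.symm,
      hid.map_eq]
  -- the positive constant c = ∫ min (min X X') 1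
  set g : Ω → ℝ := fun ω => min (min (X ω) (X' ω)) 1 with hgdef
  have hgmeas : Measurable g := (hXm.min hX'm).min measurable_const
  have hgnn : ∀ᵐ ω ∂μ, 0 ≤ g ω := by
    filter_upwards [hX'nn] with ω h using le_min (le_min (hXnn ω) h) one_pos.le
  have hgint : Integrable g μ := by
    refine Integrable.mono (integrable_const (1 : ℝ)) hgmeas.aestronglyMeasurable ?_
    filter_upwards [hgnn] with ω h
    rw [Real.norm_eq_abs, abs_of_nonneg h, norm_one]
    exact min_le_right (min (X ω) (X' ω)) 1
  have hcpos : 0 < ∫ ω, g ω ∂μ := by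
    rw [integral_pos_iff_support_of_nonneg_ae hgnn hgint]
    have hXpos : 0 < μ (X ⁻¹' Set.Ioi 0) := by
      have h := (integral_pos_iff_support_of_nonneg (fun ω => hXnn ω) hint).mp hpos
      have hset : Function.support X = X ⁻¹' Set.Ioi 0 := by
        ext ω
        simp only [Function.mem_support, Set.mem_preimage, Set.mem_Ioi]
        exact ⟨fun h' => lt_of_le_of_ne (hXnn ω) (Ne.symm h'), fun h' => ne_of_gt h'⟩
      rwa [hset] at h
    have hX'pos : 0 < μ (X' ⁻¹' Set.Ioi 0) := by
      rwa [← hid.measure_mem_eq measurableSet_Ioi]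
    have hinter : μ (X ⁻¹' Set.Ioi 0 ∩ X' ⁻¹' Set.Ioi 0)
        = μ (X ⁻¹' Set.Ioi 0) * μ (X' ⁻¹' Set.Ioi 0) :=
      hind.measure_inter_preimage_eq_mul _ _ measurableSet_Ioi measurableSet_Ioi
    have hsub : (X ⁻¹' Set.Ioi 0) ∩ (X' ⁻¹' Set.Ioi 0) ⊆ Function.support g := by
      rintro ω ⟨h1, h2⟩
      exact ne_of_gt (lt_min (lt_min h1 h2) one_pos)
    calc (0 : ENNReal) < μ (X ⁻¹' Set.Ioi 0 ∩ X' ⁻¹' Set.Ioi 0) := by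
          rw [hinter]; exact ENNReal.mul_pos (ne_of_gt hXpos) (ne_of_gt hX'pos)
    _ ≤ μ (Function.support g) := measure_mono hsub
  have hX'int : Integrable X' μ := hid.integrable_iff.mp hint
  have hXp1 : Integrable (fun ω => X ω + 1) μ := by
    simpa using hint.add (integrable_const 1)
  have hX'p1 : Integrable (fun ω => X' ω + 1) μ := by
    simpa using hX'int.add (integrable_const 1)
  set C : ℝ := (∫ ω, X ω ∂μ) + 1 with hCdef
  have hCpos : 0 < C := by positivity
  refine ⟨(∫ ω, g ω ∂μ) / (2 * C), by positivity, ?_⟩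
  rintro q ⟨hq0, hq1⟩
  -- the indicator function on the product space
  set F : ℝ × ℝ → ℝ := fun p => Set.indicator {p : ℝ × ℝ | p.1 ≤ p.2} (fun p => p.1 ^ q) p
    with hFdef
  have hFmeas : Measurable F := by
    apply Measurable.indicator ?_ (measurableSet_le measurable_fst measurable_snd)
    fun_prop
  have key : ∫ ω, F (X ω, X' ω) ∂μ = ∫ ω, F (X' ω, X ω) ∂μ := by
    have := (hpair.comp hFmeas).integral_eq
    simpa [Function.comp] using this
  have hRHS : ∫ ω in {ω | X ω ≤ X' ω}, X ω ^ q ∂μ = ∫ ω, F (X ω, X' ω) ∂μ := by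
    rw [← integral_indicator (measurableSet_le hXm hX'm)]
    apply integral_congr_ae
    filter_upwards with ω
    by_cases h : X ω ≤ X' ω
    · rw [Set.indicator_of_mem (show ω ∈ {a | X a ≤ X' a} from h)]
      exact (F_of_le h).symm
    · rw [Set.indicator_of_notMem (show ω ∉ {a | X a ≤ X' a} from h)]
      exact (F_of_not_le h).symm
  -- integrability facts
  have hF1int : Integrable (fun ω => F (X ω, X' ω)) μ := by
    refine Integrable.mono hXp1
      ((hFmeas.comp (hXm.prodMk hX'm)).aestronglyMeasurable) ?_
    filter_upwards with ω
    have h1 : 0 ≤ F (X ω, X' ω) :=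
      Set.indicator_apply_nonneg fun _ => Real.rpow_nonneg (hXnn ω) q
    have h2 : F (X ω, X' ω) ≤ X ω + 1 := by
      by_cases h : X ω ≤ X' ω
      · rw [show F (X ω, X' ω) = X ω ^ q from F_of_le h]
        exact rpow_le_add_one (hXnn ω) hq0 hq1
      · rw [show F (X ω, X' ω) = 0 from F_of_not_le h]
        linarith [hXnn ω]
    rw [Real.norm_eq_abs, Real.norm_eq_abs, abs_of_nonneg h1,
      abs_of_nonneg (by linarith [hXnn ω] : (0:ℝ) ≤ X ω + 1)]
    exact h2
  have hF2int : Integrable (fun ω => F (X' ω, X ω)) μ := by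
    refine Integrable.mono hX'p1
      ((hFmeas.comp (hX'm.prodMk hXm)).aestronglyMeasurable) ?_
    filter_upwards [hX'nn] with ω hb
    have h1 : 0 ≤ F (X' ω, X ω) :=
      Set.indicator_apply_nonneg fun _ => Real.rpow_nonneg hb q
    have h2 : F (X' ω, X ω) ≤ X' ω + 1 := by
      by_cases h : X' ω ≤ X ω
      · rw [show F (X' ω, X ω) = X' ω ^ q from F_of_le h]
        exact rpow_le_add_one hb hq0 hq1
      · rw [show F (X' ω, X ω) = 0 from F_of_not_le h]
        linarith
    rw [Real.norm_eq_abs, Real.norm_eq_abs, abs_of_nonneg h1,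
      abs_of_nonneg (by linarith : (0:ℝ) ≤ X' ω + 1)]
    exact h2
  have hXqint : Integrable (fun ω => X ω ^ q) μ := by
    refine Integrable.mono hXp1
      ((show Measurable fun ω => X ω ^ q by fun_prop).aestronglyMeasurable) ?_
    filter_upwards with ω
    rw [Real.norm_eq_abs, Real.norm_eq_abs, abs_of_nonneg (Real.rpow_nonneg (hXnn ω) q),
      abs_of_nonneg (by linarith [hXnn ω] : (0:ℝ) ≤ X ω + 1)]
    exact rpow_le_add_one (hXnn ω) hq0 hq1
  -- the a.e. pointwise bound g ≤ F(X,X') + F(X',X)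
  have hsum : ∀ᵐ ω ∂μ, g ω ≤ F (X ω, X' ω) + F (X' ω, X ω) := by
    filter_upwards [hX'nn] with ω hb
    by_cases h : X ω ≤ X' ω
    · have h1 : F (X ω, X' ω) = X ω ^ q := F_of_le h
      have h2 : 0 ≤ F (X' ω, X ω) :=
        Set.indicator_apply_nonneg fun _ => Real.rpow_nonneg hb q
      have h3 : min (X ω) 1 ≤ X ω ^ q := min_le_rpow (hXnn ω) hq0 hq1
      have h4 : g ω ≤ min (X ω) 1 := min_le_min (min_le_left _ _) le_rfl
      linarith
    · have h' : X' ω ≤ X ω := (not_le.mp h).le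
      have h1 : F (X ω, X' ω) = 0 := F_of_not_le h
      have h2 : F (X' ω, X ω) = X' ω ^ q := F_of_le h'
      have h3 : min (X' ω) 1 ≤ X' ω ^ q := min_le_rpow hb hq0 hq1
      have h4 : g ω ≤ min (X' ω) 1 := min_le_min (min_le_right _ _) le_rfl
      linarith
  have hchain : ∫ ω, g ω ∂μ ≤ 2 * ∫ ω, F (X ω, X' ω) ∂μ := by
    calc ∫ ω, g ω ∂μ ≤ ∫ ω, (F (X ω, X' ω) + F (X' ω, X ω)) ∂μ :=
          integral_mono_ae hgint (hF1int.add hF2int) hsum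
    _ = (∫ ω, F (X ω, X' ω) ∂μ) + ∫ ω, F (X' ω, X ω) ∂μ := integral_add hF1int hF2int
    _ = 2 * ∫ ω, F (X ω, X' ω) ∂μ := by rw [← key]; ring
  have hCq : ∫ ω, X ω ^ q ∂μ ≤ C := by
    calc ∫ ω, X ω ^ q ∂μ ≤ ∫ ω, (X ω + 1) ∂μ :=
          integral_mono hXqint hXp1 (fun ω => rpow_le_add_one (hXnn ω) hq0 hq1)
    _ = C := by
          rw [integral_add hint (integrable_const 1), integral_const]
          simp [hCdef]
  rw [hRHS]
  calc (∫ ω, g ω ∂μ) / (2 * C) * ∫ ω, X ω ^ q ∂μ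
      ≤ (∫ ω, g ω ∂μ) / (2 * C) * C := by
        apply mul_le_mul_of_nonneg_left hCq
        positivity
  _ = (∫ ω, g ω ∂μ) / 2 := by field_simp
  _ ≤ ∫ ω, F (X ω, X' ω) ∂μ := by linarith
end

section
/- Let $\beta > 0$ and let $\psi : [0,\infty) \to [0,\infty)$ be a continuous function with $\lim_{t \to \infty} \psi(t) = 0$. Suppose there is $K > 0$ such that for all $t > 0$ and all $u \in (0,1]$, $\psi(t) \le K u^{2\beta} + 2\psi(tu)^2$. Then for every $\alpha < \beta$, $\psi(t) = O(t^{-\alpha})$ as $t \to \infty$. -/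
/-!
Substituting `u = t ^ (-θ)` into the recursion turns a bound `ψ t ≤ C t ^ (-γ)` into one of
order `t ^ (-2βγ/(β+γ))`; as long as `γ` stays below a fixed `α < β` this raises the exponent by a
uniform amount, so finitely many rounds pass `α`. A first positive exponent comes from `ψ → 0`:
once `ψ < 1/8` beyond `T`, the bound `ψ t ≤ t ^ (-γ) / 4` for small `γ` holds on `[T, T²]` and
spreads to all `t ≥ T` through the recursion with `u = t ^ (-1/2)`.
-/

open Filter Topology

theorem isBigO_rpow_rpow_atTop_of_le {a b : ℝ} (hab : a ≤ b) :
    (fun t : ℝ => t ^ a) =O[atTop] fun t => t ^ b := by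
  refine Asymptotics.IsBigO.of_bound' ?_
  filter_upwards [eventually_ge_atTop 1] with t ht
  rw [Real.norm_of_nonneg (by positivity), Real.norm_of_nonneg (by positivity)]
  exact Real.rpow_le_rpow_of_exponent_le ht hab

theorem Asymptotics.isBigO_iff_eventually_le_mul {α : Type*} {l : Filter α} {f g : α → ℝ}
    (hf : 0 ≤ᶠ[l] f) (hg : 0 ≤ᶠ[l] g) : f =O[l] g ↔ ∃ C, ∀ᶠ x in l, f x ≤ C * g x := by
  constructor
  · intro h
    obtain ⟨C, hC⟩ := h.bound
    refine ⟨C, ?_⟩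
    filter_upwards [hC, hf, hg] with x hx hfx hgx
    rwa [Real.norm_of_nonneg hfx, Real.norm_of_nonneg hgx] at hx
  · rintro ⟨C, hC⟩
    refine Asymptotics.IsBigO.of_bound C ?_
    filter_upwards [hC, hf, hg] with x hx hfx hgx
    rwa [Real.norm_of_nonneg hfx, Real.norm_of_nonneg hgx]

theorem isBigO_rpow_neg_iff {ψ : ℝ → ℝ} (hnn : ∀ t, 0 ≤ t → 0 ≤ ψ t) (γ : ℝ) :
    ψ =O[atTop] (fun t => t ^ (-γ)) ↔ ∃ C, ∀ᶠ t in atTop, ψ t ≤ C * t ^ (-γ) :=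
  Asymptotics.isBigO_iff_eventually_le_mul
    ((eventually_ge_atTop 0).mono hnn) ((eventually_ge_atTop 0).mono fun _ ht => by positivity)

theorem exists_gt_of_add_mem {S : Set ℝ} {a c x₀ : ℝ} (hc : 0 < c) (hx₀ : x₀ ∈ S)
    (hstep : ∀ x ∈ S, x ≤ a → x + c ∈ S) : ∃ x ∈ S, a < x := by
  by_contra! hle
  have hmem : ∀ n : ℕ, x₀ + n * c ∈ S := by
    intro n
    induction n with
    | zero => simpa using hx₀
    | succ n ih =>
      convert hstep _ ih (hle _ ih) using 1
      push_cast; ring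
  obtain ⟨n, hn⟩ := exists_nat_gt ((a - x₀) / c)
  rw [div_lt_iff₀ hc] at hn
  linarith [hle _ (hmem n)]

theorem forall_ge_of_sqrt_step {P : ℝ → Prop} {T : ℝ} (hT : 1 < T)
    (hbase : ∀ t ∈ Set.Icc T (T ^ 2), P t) (hstep : ∀ t, T ^ 2 ≤ t → P (√t) → P t) :
    ∀ t, T ≤ t → P t := by
  have hT0 : 0 ≤ T := by linarith
  have hpow : ∀ n : ℕ, ∀ t ∈ Set.Icc T (T ^ 2 ^ (n + 1)), P t := by
    intro n
    induction n with
    | zero => simpa using hbase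
    | succ n ih =>
      rintro t ⟨hTt, htn⟩
      rcases le_or_gt t (T ^ 2) with ht | ht
      · exact hbase t ⟨hTt, ht⟩
      · refine hstep t ht.le (ih _ ⟨?_, ?_⟩)
        · exact Real.le_sqrt_of_sq_le ht.le
        · rw [Real.sqrt_le_left (by positivity), ← pow_mul, ← pow_succ]
          exact htn
  intro t ht
  obtain ⟨n, hn⟩ := pow_unbounded_of_one_lt t hT
  refine hpow n t ⟨ht, hn.le.trans (pow_le_pow_right₀ hT.le ?_)⟩
  exact (Nat.lt_two_pow_self).le.trans (Nat.pow_le_pow_right two_pos n.le_succ)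

theorem add_le_two_mul_mul_div_add {α β γ γ₀ : ℝ} (hγ₀ : 0 < γ₀) (hγ₀γ : γ₀ ≤ γ) (hγα : γ ≤ α)
    (hαβ : α < β) : γ + γ₀ * (β - α) / (2 * β) ≤ 2 * β * γ / (β + γ) := by
  have hβ : 0 < β := by linarith
  have hβγ : 0 < β + γ := by linarith
  have hc : γ₀ * (β - α) / (2 * β) * (β + γ) ≤ γ * (β - γ) := calc
    γ₀ * (β - α) / (2 * β) * (β + γ) ≤ γ₀ * (β - α) / (2 * β) * (2 * β) := by
      gcongr
      linarith
    _ = γ₀ * (β - α) := by field_simp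
    _ ≤ γ * (β - γ) := by gcongr; linarith
  rw [le_div_iff₀ hβγ]
  nlinarith

def RecursiveBound (β K : ℝ) (ψ : ℝ → ℝ) : Prop :=
  ∀ t : ℝ, 0 < t → ∀ u ∈ Set.Ioc (0 : ℝ) 1, ψ t ≤ K * u ^ (2 * β) + 2 * ψ (t * u) ^ 2

namespace RecursiveBound

variable {β K : ℝ} {ψ : ℝ → ℝ}

theorem le_of_le_rpow (hrec : RecursiveBound β K ψ) (hnn : ∀ t, 0 ≤ t → 0 ≤ ψ t)
    {C γ θ t : ℝ} (ht : 1 ≤ t) (hθ : 0 ≤ θ) (h : ψ (t ^ (1 - θ)) ≤ C * (t ^ (1 - θ)) ^ (-γ)) :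
    ψ t ≤ K * t ^ (-(2 * β * θ)) + 2 * C ^ 2 * t ^ (-(2 * γ * (1 - θ))) := by
  have ht0 : 0 < t := by linarith
  have hu : t ^ (-θ) ∈ Set.Ioc (0 : ℝ) 1 :=
    ⟨by positivity, Real.rpow_le_one_of_one_le_of_nonpos ht (neg_nonpos.2 hθ)⟩
  have htu : t * t ^ (-θ) = t ^ (1 - θ) := by
    rw [sub_eq_add_neg, Real.rpow_add ht0, Real.rpow_one]
  calc ψ t ≤ K * (t ^ (-θ)) ^ (2 * β) + 2 * ψ (t ^ (1 - θ)) ^ 2 := by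
        rw [← htu]; exact hrec t ht0 _ hu
    _ ≤ K * (t ^ (-θ)) ^ (2 * β) + 2 * (C * (t ^ (1 - θ)) ^ (-γ)) ^ 2 := by
        gcongr
        exact hnn _ (by positivity)
    _ = K * t ^ (-(2 * β * θ)) + 2 * C ^ 2 * t ^ (-(2 * γ * (1 - θ))) := by
        rw [mul_pow, ← Real.rpow_mul ht0.le, ← Real.rpow_mul ht0.le,
          ← Real.rpow_natCast (t ^ _) 2, ← Real.rpow_mul ht0.le]
        ring_nf

theorem isBigO_rpow_of_isBigO_rpow (hrec : RecursiveBound β K ψ) (hβ : 0 < β)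
    (hnn : ∀ t, 0 ≤ t → 0 ≤ ψ t) {γ : ℝ} (hγ : 0 < γ) (h : ψ =O[atTop] fun t => t ^ (-γ)) :
    ψ =O[atTop] fun t => t ^ (-(2 * β * γ / (β + γ))) := by
  obtain ⟨C, hC⟩ := (isBigO_rpow_neg_iff hnn γ).1 h
  have hβγ : 0 < β + γ := by positivity
  have hθ : 1 - γ / (β + γ) = β / (β + γ) := by field_simp; ring
  refine (isBigO_rpow_neg_iff hnn _).2 ⟨K + 2 * C ^ 2, ?_⟩
  filter_upwards [(tendsto_rpow_atTop (div_pos hβ hβγ)).eventually hC, eventually_ge_atTop 1]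
    with t hψ ht
  -- the scale `u = t ^ (-γ / (β + γ))` balances the two terms of the recursion
  have hψt := hrec.le_of_le_rpow hnn ht (θ := γ / (β + γ)) (by positivity) (by rwa [hθ])
  rw [hθ, show 2 * β * (γ / (β + γ)) = 2 * β * γ / (β + γ) by ring,
    show 2 * γ * (β / (β + γ)) = 2 * β * γ / (β + γ) by ring] at hψt
  linarith

theorem exists_isBigO_rpow (hrec : RecursiveBound β K ψ) (hβ : 0 < β)
    (hnn : ∀ t, 0 ≤ t → 0 ≤ ψ t) (hlim : Tendsto ψ atTop (𝓝 0)) :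
    ∃ γ : ℝ, 0 < γ ∧ ψ =O[atTop] fun t => t ^ (-γ) := by
  obtain ⟨T, hT⟩ := eventually_atTop.1 <| (eventually_gt_atTop 1).and <|
    (hlim.eventually (gt_mem_nhds (by norm_num : (0 : ℝ) < 1 / 8))).and <|
    (tendsto_rpow_atTop (half_pos hβ)).eventually_ge_atTop (8 * K)
  have hT1 : 1 < T := (hT T le_rfl).1
  have hT0 : 0 < T := by linarith
  -- `T ^ (2γ) ≤ 2` gives the bound on `[T, T²]`, and `γ ≤ β / 2` absorbs the `K`-term
  set γ := min (β / 2) (Real.logb T 2 / 2)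
  have hγ : 0 < γ := lt_min (half_pos hβ) (half_pos (Real.logb_pos hT1 one_lt_two))
  have hTγ : T ^ (2 * γ) ≤ 2 := calc
    T ^ (2 * γ) ≤ T ^ Real.logb T 2 :=
      Real.rpow_le_rpow_of_exponent_le hT1.le
        (by linarith [min_le_right (β / 2) (Real.logb T 2 / 2)])
    _ = 2 := Real.rpow_logb (by linarith) hT1.ne' two_pos
  refine ⟨γ, hγ, (isBigO_rpow_neg_iff hnn γ).2 ⟨1 / 4, eventually_atTop.2 ⟨T,
    forall_ge_of_sqrt_step hT1 ?_ ?_⟩⟩⟩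
  · rintro t ⟨hTt, htT⟩
    have hhalf : 1 / 2 ≤ t ^ (-γ) := calc
      1 / 2 ≤ (T ^ (2 * γ))⁻¹ := by rw [one_div]; exact inv_anti₀ (by positivity) hTγ
      _ = (T ^ 2) ^ (-γ) := by
        rw [Real.rpow_neg (by positivity), ← Real.rpow_natCast, ← Real.rpow_mul hT0.le]
        norm_num
      _ ≤ t ^ (-γ) := Real.rpow_le_rpow_of_nonpos (by linarith) htT (by linarith)
    linarith [(hT t hTt).2.1, hhalf]
  · intro t hTt h
    have ht : 1 ≤ t := by nlinarith
    have hψt := hrec.le_of_le_rpow hnn ht (θ := 1 / 2) (C := 1 / 4) (γ := γ) (by norm_num)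
      (by rwa [show (1 : ℝ) - 1 / 2 = 1 / 2 by norm_num, ← Real.sqrt_eq_rpow])
    have hsmall : 8 * K * t ^ (-β) ≤ t ^ (-γ) := calc
      8 * K * t ^ (-β) ≤ t ^ (β - γ) * t ^ (-β) := by
        gcongr
        exact (hT t (by nlinarith)).2.2.trans <| Real.rpow_le_rpow_of_exponent_le ht
          (by linarith [min_le_left (β / 2) (Real.logb T 2 / 2)])
      _ = t ^ (-γ) := by rw [← Real.rpow_add (by linarith)]; ring_nf
    rw [show 2 * β * (1 / 2) = β by ring, show 2 * γ * (1 - 1 / 2) = γ by ring] at hψt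
    linarith

end RecursiveBound

theorem stmt_8_general (β : ℝ) (hβ : 0 < β) (ψ : ℝ → ℝ)
    (hnn : ∀ t, 0 ≤ t → 0 ≤ ψ t)
    (hlim : Tendsto ψ atTop (nhds 0))
    (K : ℝ)
    (hrec : ∀ t : ℝ, 0 < t → ∀ u ∈ Set.Ioc (0 : ℝ) 1, ψ t ≤ K * u ^ (2 * β) + 2 * ψ (t * u) ^ 2) :
    ∀ α : ℝ, α < β → ψ =O[atTop] fun t => t ^ (-α) := by
  intro α hα
  have hrec : RecursiveBound β K ψ := hrec
  obtain ⟨γ₀, hγ₀, hψγ₀⟩ := hrec.exists_isBigO_rpow hβ hnn hlim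
  have hc : 0 < γ₀ * (β - α) / (2 * β) := by have := sub_pos.2 hα; positivity
  obtain ⟨γ, ⟨-, hψγ⟩, hαγ⟩ :=
    exists_gt_of_add_mem (S := {γ | γ₀ ≤ γ ∧ ψ =O[atTop] fun t => t ^ (-γ)}) hc ⟨le_rfl, hψγ₀⟩
      fun γ ⟨hγ₀γ, hψγ⟩ hγα =>
        ⟨by linarith, (hrec.isBigO_rpow_of_isBigO_rpow hβ hnn (hγ₀.trans_le hγ₀γ) hψγ).trans <|
          isBigO_rpow_rpow_atTop_of_le <| neg_le_neg <| add_le_two_mul_mul_div_add hγ₀ hγ₀γ hγα hα⟩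
  exact hψγ.trans (isBigO_rpow_rpow_atTop_of_le (neg_le_neg hαγ.le))

theorem stmt_8 (β : ℝ) (hβ : 0 < β) (ψ : ℝ → ℝ)
    (hcont : ContinuousOn ψ (Set.Ici 0)) (hnn : ∀ t, 0 ≤ t → 0 ≤ ψ t)
    (hlim : Tendsto ψ atTop (nhds 0))
    (K : ℝ) (hK : 0 < K)
    (hrec : ∀ t : ℝ, 0 < t → ∀ u ∈ Set.Ioc (0 : ℝ) 1, ψ t ≤ K * u ^ (2 * β) + 2 * ψ (t * u) ^ 2) :
    ∀ α : ℝ, α < β → ψ =O[atTop] fun t => t ^ (-α) :=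
  stmt_8_general β hβ ψ hnn hlim K hrec
end

section
/- Let $\ell \ge 2$, $q > 1$, and let $Y$ be a nonnegative random variable with $0 < E[Y^q] < \infty$ and $E[Y] = 1$, satisfying the equality in law $\ell Y = \sum_{j=0}^{\ell-1} W_j Y(j)$, where $W_0,\dots,W_{\ell-1}$ are i.i.d. copies of a nonnegative random variable $W$ with $E[W]=1$ and $E[W^q]<\infty$, the $Y(j)$ are i.i.d. copies of $Y$, and all $2\ell$ variables are independent. Then $E[W^q] < \ell^{q-1}$. -/
/-!
Take q-th moments in the fixed-point equation. The left side gives `E[(ℓY)^q] = ℓ^q E[Y^q]`.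
On the right, `x ↦ x^q` is superadditive on `[0, ∞)` (from `x^q ≤ x s^(q-1)` for `0 ≤ x ≤ s`), and
strictly so as soon as two summands are positive; by independence and `E[W] = E[Y] = 1` this
happens for two distinct summands `W_j Y(j)` with positive probability. Hence
`ℓ^q E[Y^q] > ∑ E[(W_j Y(j))^q] = ℓ E[W^q] E[Y^q]`, and dividing by `ℓ E[Y^q]` gives the claim.
-/

open MeasureTheory ProbabilityTheory Finset

namespace Real

variable {ι : Type*} {q : ℝ}

lemma rpow_eq_mul_rpow_sub_one {a : ℝ} (ha : 0 ≤ a) (hq : q ≠ 0) : a ^ q = a * a ^ (q - 1) := by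
  simpa using rpow_one_add' ha (y := q - 1) (by simpa using hq)

lemma rpow_le_mul_rpow_sub_one {a s : ℝ} (ha : 0 ≤ a) (has : a ≤ s) (hq : 1 ≤ q) :
    a ^ q ≤ a * s ^ (q - 1) := by
  rw [rpow_eq_mul_rpow_sub_one ha (by linarith)]
  gcongr

lemma rpow_lt_mul_rpow_sub_one {a s : ℝ} (ha : 0 < a) (has : a < s) (hq : 1 < q) :
    a ^ q < a * s ^ (q - 1) := by
  rw [rpow_eq_mul_rpow_sub_one ha.le (by linarith)]
  gcongr

lemma sum_rpow_le_rpow_sum (s : Finset ι) {x : ι → ℝ} (hx : ∀ i ∈ s, 0 ≤ x i) (hq : 1 ≤ q) :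
    ∑ i ∈ s, x i ^ q ≤ (∑ i ∈ s, x i) ^ q := by
  have hS : 0 ≤ ∑ i ∈ s, x i := sum_nonneg hx
  calc ∑ i ∈ s, x i ^ q ≤ ∑ i ∈ s, x i * (∑ k ∈ s, x k) ^ (q - 1) :=
        sum_le_sum fun i hi => rpow_le_mul_rpow_sub_one (hx i hi) (single_le_sum hx hi) hq
    _ = (∑ i ∈ s, x i) ^ q := by rw [← sum_mul, ← rpow_eq_mul_rpow_sub_one hS (by linarith)]

lemma sum_rpow_lt_rpow_sum (s : Finset ι) {x : ι → ℝ} (hx : ∀ i ∈ s, 0 ≤ x i) (hq : 1 < q)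
    {i j : ι} (hi : i ∈ s) (hj : j ∈ s) (hij : i ≠ j) (hxi : 0 < x i) (hxj : 0 < x j) :
    ∑ k ∈ s, x k ^ q < (∑ k ∈ s, x k) ^ q := by
  classical
  have hS : 0 ≤ ∑ k ∈ s, x k := sum_nonneg hx
  have hxiS : x i < ∑ k ∈ s, x k := by
    rw [← add_sum_erase s x hi]
    have := single_le_sum (fun k hk => hx k (mem_of_mem_erase hk)) (mem_erase.2 ⟨hij.symm, hj⟩)
    linarith
  calc ∑ k ∈ s, x k ^ q < ∑ k ∈ s, x k * (∑ m ∈ s, x m) ^ (q - 1) :=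
        sum_lt_sum (fun k hk => rpow_le_mul_rpow_sub_one (hx k hk) (single_le_sum hx hk) hq.le)
          ⟨i, hi, rpow_lt_mul_rpow_sub_one hxi hxiS hq⟩
    _ = (∑ k ∈ s, x k) ^ q := by rw [← sum_mul, ← rpow_eq_mul_rpow_sub_one hS (by linarith)]

end Real

namespace MeasureTheory

variable {Ω ι : Type*} [MeasurableSpace Ω] {μ : Measure Ω}

lemma measure_setOf_pos_ne_zero_of_integral_pos {f : Ω → ℝ} (hf : 0 < ∫ ω, f ω ∂μ) :
    μ {ω | 0 < f ω} ≠ 0 := by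
  intro h
  have : f ≤ᵐ[μ] 0 := by
    rw [Filter.EventuallyLE, ae_iff]
    simpa using h
  exact (integral_nonpos_of_ae this).not_gt hf

lemma sum_integral_rpow_lt_integral_rpow_sum [Fintype ι] {q : ℝ} (hq : 1 < q) {X : ι → Ω → ℝ}
    (hX : ∀ i, AEStronglyMeasurable (X i) μ) (hnn : ∀ i, 0 ≤ᵐ[μ] X i)
    (hint : Integrable (fun ω => (∑ i, X i ω) ^ q) μ) {i j : ι} (hij : i ≠ j)
    (hpos : μ {ω | 0 < X i ω ∧ 0 < X j ω} ≠ 0) :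
    ∑ k, ∫ ω, X k ω ^ q ∂μ < ∫ ω, (∑ k, X k ω) ^ q ∂μ := by
  have hnn' : ∀ᵐ ω ∂μ, ∀ k, 0 ≤ X k ω := ae_all_iff.2 hnn
  have hint_k : ∀ k, Integrable (fun ω => X k ω ^ q) μ := fun k => by
    refine hint.mono' ((hX k).aemeasurable.pow_const q).aestronglyMeasurable ?_
    filter_upwards [hnn'] with ω hω
    rw [Real.norm_of_nonneg (Real.rpow_nonneg (hω k) q)]
    exact Real.rpow_le_rpow (hω k) (single_le_sum (fun k _ => hω k) (mem_univ k)) (by linarith)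
  rw [← integral_finsetSum _ fun k _ => hint_k k]
  have hle : (fun ω => ∑ k, X k ω ^ q) ≤ᵐ[μ] fun ω => (∑ k, X k ω) ^ q := by
    filter_upwards [hnn'] with ω hω
    exact Real.sum_rpow_le_rpow_sum _ (fun k _ => hω k) hq.le
  refine (integral_mono_ae (integrable_finsetSum _ fun k _ => hint_k k) hint hle).lt_of_ne ?_
  rw [Ne, integral_eq_iff_of_ae_le (integrable_finsetSum _ fun k _ => hint_k k) hint hle]
  intro heq
  have hnot : ∀ᵐ ω ∂μ, ¬(0 < X i ω ∧ 0 < X j ω) := by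
    filter_upwards [heq, hnn'] with ω hω hωnn ⟨hi, hj⟩
    exact (Real.sum_rpow_lt_rpow_sum univ (fun k _ => hωnn k) hq (mem_univ i) (mem_univ j) hij
      hi hj).ne hω
  exact hpos (by simpa only [ae_iff, not_not] using hnot)

end MeasureTheory

namespace ProbabilityTheory

variable {Ω ι : Type*} [MeasurableSpace Ω] {μ : Measure Ω}

lemma iIndepFun.measure_biInter_preimage_ne_zero {β : ι → Type*} {m : ∀ i, MeasurableSpace (β i)}
    {F : ∀ i, Ω → β i} (hF : iIndepFun F μ) (S : Finset ι) {sets : ∀ i, Set (β i)}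
    (hsets : ∀ i ∈ S, MeasurableSet (sets i)) (hpos : ∀ i ∈ S, μ (F i ⁻¹' sets i) ≠ 0) :
    μ (⋂ i ∈ S, F i ⁻¹' sets i) ≠ 0 := by
  rw [hF.measure_inter_preimage_eq_mul S hsets]
  exact prod_ne_zero_iff.2 hpos

lemma IndepFun.integral_mul_rpow {X Y : Ω → ℝ} (hXY : IndepFun X Y μ)
    (hX : AEStronglyMeasurable X μ) (hY : AEStronglyMeasurable Y μ)
    (hXnn : 0 ≤ᵐ[μ] X) (hYnn : 0 ≤ᵐ[μ] Y) (q : ℝ) :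
    ∫ ω, (X ω * Y ω) ^ q ∂μ = (∫ ω, X ω ^ q ∂μ) * ∫ ω, Y ω ^ q ∂μ := by
  have hrpow : Measurable fun x : ℝ => x ^ q := by fun_prop
  calc ∫ ω, (X ω * Y ω) ^ q ∂μ = ∫ ω, X ω ^ q * Y ω ^ q ∂μ := by
        refine integral_congr_ae ?_
        filter_upwards [hXnn, hYnn] with ω hx hy
        exact Real.mul_rpow hx hy
    _ = _ := (hXY.comp hrpow hrpow).integral_fun_mul_eq_mul_integral
        (hX.aemeasurable.pow_const q).aestronglyMeasurable
        (hY.aemeasurable.pow_const q).aestronglyMeasurable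

lemma iIndepFun.measure_setOf_mul_pos_ne_zero {A B : ι → Ω → ℝ} (hAB : iIndepFun (Sum.elim A B) μ)
    (hA : ∀ i, 0 < ∫ ω, A i ω ∂μ) (hB : ∀ i, 0 < ∫ ω, B i ω ∂μ) (i j : ι) :
    μ {ω | 0 < A i ω * B i ω ∧ 0 < A j ω * B j ω} ≠ 0 := by
  classical
  refine fun h => hAB.measure_biInter_preimage_ne_zero {.inl i, .inr i, .inl j, .inr j}
    (sets := fun _ => Set.Ioi 0) (fun _ _ => measurableSet_Ioi) (fun k _ => ?_)
    (measure_mono_null (fun ω hω => ?_) h)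
  · rcases k with k | k
    exacts [measure_setOf_pos_ne_zero_of_integral_pos (hA k),
      measure_setOf_pos_ne_zero_of_integral_pos (hB k)]
  · simp only [mem_insert, mem_singleton, Set.mem_iInter, Set.mem_preimage, Set.mem_Ioi] at hω
    exact ⟨mul_pos (hω (.inl i) (by simp)) (hω (.inr i) (by simp)),
      mul_pos (hω (.inl j) (by simp)) (hω (.inr j) (by simp))⟩

end ProbabilityTheory

theorem stmt_18_general {Ω : Type*} [MeasurableSpace Ω] (μ : Measure Ω)
    (ℓ : ℕ) (hℓ : 2 ≤ ℓ) (q : ℝ) (hq : 1 < q)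
    (W Y : Ω → ℝ) (hWnn : ∀ ω, 0 ≤ W ω) (hYnn : ∀ ω, 0 ≤ Y ω)
    (hWexp : ∫ ω, W ω ∂μ = 1)
    (hYexp : ∫ ω, Y ω ∂μ = 1) (hYq : Integrable (fun ω => Y ω ^ q) μ)
    (Wf Zf : Fin ℓ → Ω → ℝ)
    (hind : iIndepFun (Sum.elim Wf Zf) μ)
    (hWd : ∀ j, IdentDistrib (Wf j) W μ μ)
    (hZd : ∀ j, IdentDistrib (Zf j) Y μ μ)
    (heq : IdentDistrib (fun ω => (ℓ : ℝ) * Y ω) (fun ω => ∑ j, Wf j ω * Zf j ω) μ μ) :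
    ∫ ω, W ω ^ q ∂μ < (ℓ : ℝ) ^ (q - 1) := by
  have hrpow : Measurable fun x : ℝ => x ^ q := by fun_prop
  have hℓpos : (0 : ℝ) < ℓ := by positivity
  have hscale : ∀ ω, ((ℓ : ℝ) * Y ω) ^ q = (ℓ : ℝ) ^ q * Y ω ^ q := fun ω =>
    Real.mul_rpow hℓpos.le (hYnn ω)
  have hWf_nn : ∀ j, 0 ≤ᵐ[μ] Wf j := fun j =>
    (hWd j).symm.ae_snd measurableSet_Ici (.of_forall hWnn)
  have hZf_nn : ∀ j, 0 ≤ᵐ[μ] Zf j := fun j =>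
    (hZd j).symm.ae_snd measurableSet_Ici (.of_forall hYnn)
  have hmoment : ∀ j, ∫ ω, (Wf j ω * Zf j ω) ^ q ∂μ = (∫ ω, W ω ^ q ∂μ) * ∫ ω, Y ω ^ q ∂μ := by
    intro j
    refine ((hind.indepFun Sum.inl_ne_inr).integral_mul_rpow
      (hWd j).aemeasurable_fst.aestronglyMeasurable (hZd j).aemeasurable_fst.aestronglyMeasurable
      (hWf_nn j) (hZf_nn j) q).trans ?_
    exact congr_arg₂ (· * ·) ((hWd j).comp hrpow).integral_eq ((hZd j).comp hrpow).integral_eq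
  have hsum_int : Integrable (fun ω => (∑ j, Wf j ω * Zf j ω) ^ q) μ :=
    (heq.comp hrpow).integrable_iff.1 <|
      (hYq.const_mul _).congr (.of_forall fun ω => (hscale ω).symm)
  obtain ⟨i₀, i₁, hi⟩ := (Fin.nontrivial_iff_two_le.2 hℓ).exists_pair_ne
  have hpos := hind.measure_setOf_mul_pos_ne_zero
    (fun j => by simp [(hWd j).integral_eq, hWexp]) (fun j => by simp [(hZd j).integral_eq, hYexp])
    i₀ i₁
  have key := (sum_integral_rpow_lt_integral_rpow_sum (X := fun j ω => Wf j ω * Zf j ω) hq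
    (fun j => ((hWd j).aemeasurable_fst.mul (hZd j).aemeasurable_fst).aestronglyMeasurable)
    (fun j => by filter_upwards [hWf_nn j, hZf_nn j] with ω h₁ h₂ using mul_nonneg h₁ h₂)
    hsum_int hi hpos).trans_eq (heq.comp hrpow).integral_eq.symm
  simp only [Function.comp_def, hscale, integral_const_mul, hmoment, sum_const, card_univ,
    Fintype.card_fin, nsmul_eq_mul, Real.rpow_eq_mul_rpow_sub_one (q := q) hℓpos.le (by linarith)]
    at key
  refine lt_of_mul_lt_mul_left (a := ℓ * ∫ ω, Y ω ^ q ∂μ) ?_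
    (mul_nonneg hℓpos.le (integral_nonneg fun ω => Real.rpow_nonneg (hYnn ω) q))
  linarith

theorem stmt_18 {Ω : Type*} [MeasurableSpace Ω] (μ : Measure Ω) [IsProbabilityMeasure μ]
    (ℓ : ℕ) (hℓ : 2 ≤ ℓ) (q : ℝ) (hq : 1 < q)
    (W Y : Ω → ℝ) (hWnn : ∀ ω, 0 ≤ W ω) (hYnn : ∀ ω, 0 ≤ Y ω)
    (hWexp : ∫ ω, W ω ∂μ = 1) (hWq : Integrable (fun ω => W ω ^ q) μ)
    (hYexp : ∫ ω, Y ω ∂μ = 1) (hYq : Integrable (fun ω => Y ω ^ q) μ)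
    (hYqpos : 0 < ∫ ω, Y ω ^ q ∂μ)
    (Wf Zf : Fin ℓ → Ω → ℝ)
    (hind : iIndepFun (Sum.elim Wf Zf) μ)
    (hWd : ∀ j, IdentDistrib (Wf j) W μ μ)
    (hZd : ∀ j, IdentDistrib (Zf j) Y μ μ)
    (heq : IdentDistrib (fun ω => (ℓ : ℝ) * Y ω) (fun ω => ∑ j, Wf j ω * Zf j ω) μ μ) :
    ∫ ω, W ω ^ q ∂μ < (ℓ : ℝ) ^ (q - 1) :=
  stmt_18_general μ ℓ hℓ q hq W Y hWnn hYnn hWexp hYexp hYq Wf Zf hind hWd hZd heq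
end

section
/- Let $\ell \ge 2$ and let $W$ be a nonnegative random variable with $E[W] = 1$. Suppose $Y$ is a nonnegative integrable random variable with $0 < E[Y\log Y] < \infty$ satisfying the equality in law $\ell Y = \sum_{j=0}^{\ell-1} W_j Y(j)$ with $W_0,\dots,W_{\ell-1}$ i.i.d. copies of $W$, $Y(0),\dots,Y(\ell-1)$ i.i.d. copies of $Y$, all independent, and $E[Y] = 1$, and assume $E[WY\log(WY)]$ is finite. Then $E[W\log W] < \ln \ell$. -/
/-!
Write `P_j = W_j Y(j)`. Since `x ↦ x log x` is strictly superadditive on positive reals,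
`E[(∑ P_j) log (∑ P_j)] > ∑ E[P_j log P_j]`, all `P_j` being positive with positive probability
by independence. By the fixed-point equation the left side is `ℓ log ℓ + ℓ E[Y log Y]`; by
independence of `W_j` and `Y(j)` (both of mean one) each term on the right is
`E[W log W] + E[Y log Y]`. Integrability of `W log W` and `Y log Y` follows from that of
`P_j log P_j` by Fubini, on a slice where the other factor is a nonzero constant.
-/

open MeasureTheory ProbabilityTheory Real Finset

namespace Real

lemma mul_mul_log_mul (a b : ℝ) : a * b * log (a * b) = a * log a * b + a * (b * log b) := by
  have := negMulLog_mul a b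
  simp only [negMulLog] at this
  linear_combination -this

lemma measurable_mul_log : Measurable fun x : ℝ => x * log x :=
  continuous_mul_log.measurable

lemma mul_log_le_mul_log_of_le {a b : ℝ} (ha : 0 ≤ a) (hab : a ≤ b) : a * log a ≤ a * log b := by
  rcases ha.eq_or_lt with rfl | ha
  · simp
  · exact mul_le_mul_of_nonneg_left (log_le_log ha hab) ha.le

variable {ι : Type*} [Fintype ι]

lemma sum_mul_log_le {a : ι → ℝ} (ha : ∀ i, 0 ≤ a i) :
    ∑ i, a i * log (a i) ≤ (∑ i, a i) * log (∑ i, a i) := by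
  rw [sum_mul]
  exact sum_le_sum fun i _ =>
    mul_log_le_mul_log_of_le (ha i) (single_le_sum (fun j _ => ha j) (mem_univ i))

lemma sum_mul_log_lt [Nontrivial ι] {a : ι → ℝ} (ha : ∀ i, 0 < a i) :
    ∑ i, a i * log (a i) < (∑ i, a i) * log (∑ i, a i) := by
  rw [sum_mul]
  refine sum_lt_sum_of_nonempty univ_nonempty fun i _ => ?_
  obtain ⟨j, hji⟩ := exists_ne i
  have hlt : a i < ∑ k, a k :=
    single_lt_sum hji (mem_univ i) (mem_univ j) (ha j) fun k _ _ => (ha k).le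
  exact mul_lt_mul_of_pos_left (log_lt_log (ha i) hlt) (ha i)

end Real

section

variable {Ω : Type*} [MeasurableSpace Ω] {μ : Measure Ω}

lemma integral_sum_mul_log_lt {ι : Type*} [Fintype ι] [Nontrivial ι] {f : ι → Ω → ℝ}
    (hf : ∀ i, 0 ≤ᵐ[μ] f i) (hint : ∀ i, Integrable (fun ω => f i ω * log (f i ω)) μ)
    (hS : Integrable (fun ω => (∑ i, f i ω) * log (∑ i, f i ω)) μ)
    (hpos : μ {ω | ∀ i, f i ω ≠ 0} ≠ 0) :
    ∫ ω, ∑ i, f i ω * log (f i ω) ∂μ < ∫ ω, (∑ i, f i ω) * log (∑ i, f i ω) ∂μ := by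
  have hsum : Integrable (fun ω => ∑ i, f i ω * log (f i ω)) μ :=
    integrable_finsetSum univ fun i _ => hint i
  have hgap : Integrable
      (fun ω => (∑ i, f i ω) * log (∑ i, f i ω) - ∑ i, f i ω * log (f i ω)) μ := hS.sub hsum
  have hnn : ∀ᵐ ω ∂μ, ∀ i, 0 ≤ f i ω := ae_all_iff.2 hf
  rw [← sub_pos, ← integral_sub hS hsum, integral_pos_iff_support_of_nonneg_ae _ hgap]
  · refine pos_of_ne_zero fun h0 => hpos (measure_mono_null_ae ?_ h0)
    filter_upwards [hnn] with ω hω hne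
    exact (sub_pos.2 (sum_mul_log_lt fun i => (hω i).lt_of_ne' (hne i))).ne'
  · filter_upwards [hnn] with ω hω
    exact sub_nonneg.2 (sum_mul_log_le hω)

lemma MeasureTheory.measure_ne_zero_of_integral_ne_zero {f : Ω → ℝ} (h : ∫ ω, f ω ∂μ ≠ 0) :
    μ {ω | f ω ≠ 0} ≠ 0 :=
  frequently_ae_iff.1 (frequently_ae_ne_zero_of_integral_ne_zero h)

lemma MeasureTheory.Integrable.const_mul_mul_log {Y : Ω → ℝ} (c : ℝ) (hY : Integrable Y μ)
    (hYlog : Integrable (fun ω => Y ω * log (Y ω)) μ) :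
    Integrable (fun ω => c * Y ω * log (c * Y ω)) μ := by
  simp_rw [mul_mul_log_mul]
  exact (hY.const_mul (c * log c)).add (hYlog.const_mul c)

lemma integral_const_mul_mul_log {Y : Ω → ℝ} (c : ℝ) (hY : Integrable Y μ)
    (hYlog : Integrable (fun ω => Y ω * log (Y ω)) μ) :
    ∫ ω, c * Y ω * log (c * Y ω) ∂μ = c * log c * ∫ ω, Y ω ∂μ + c * ∫ ω, Y ω * log (Y ω) ∂μ := by
  simp_rw [mul_mul_log_mul]
  rw [integral_add (hY.const_mul (c * log c)) (hYlog.const_mul c), integral_const_mul,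
    integral_const_mul]

namespace ProbabilityTheory

lemma iIndepFun.measure_iInter_preimage_ne_zero {ι : Type*} [Fintype ι] {β : ι → Type*}
    [∀ i, MeasurableSpace (β i)] {X : ∀ i, Ω → β i} (h : iIndepFun X μ) {A : ∀ i, Set (β i)}
    (hA : ∀ i, MeasurableSet (A i)) (hpos : ∀ i, μ (X i ⁻¹' A i) ≠ 0) :
    μ (⋂ i, X i ⁻¹' A i) ≠ 0 := by
  have := h.measure_inter_preimage_eq_mul univ fun i _ => hA i
  simp only [mem_univ, Set.iInter_true] at this
  rw [this]
  exact prod_ne_zero_iff.2 fun i _ => hpos i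

lemma iIndepFun.measure_forall_mul_ne_zero {ι : Type*} [Fintype ι] {X Z : ι → Ω → ℝ}
    (h : iIndepFun (Sum.elim X Z) μ) (hX : ∀ i, μ {ω | X i ω ≠ 0} ≠ 0)
    (hZ : ∀ i, μ {ω | Z i ω ≠ 0} ≠ 0) : μ {ω | ∀ i, X i ω * Z i ω ≠ 0} ≠ 0 := by
  have := h.measure_iInter_preimage_ne_zero (A := fun _ => {0}ᶜ)
    (fun _ => (measurableSet_singleton 0).compl) (by rintro (i | i); exacts [hX i, hZ i])
  refine fun h0 => this (measure_mono_null (fun ω hω => ?_) h0)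
  intro i
  simp only [Set.mem_iInter, Set.mem_preimage, Set.mem_compl_singleton_iff] at hω
  exact mul_ne_zero (hω (.inl i)) (hω (.inr i))

lemma IdentDistrib.mul_log {ν : Measure Ω} {X Y : Ω → ℝ} (h : IdentDistrib X Y μ ν) :
    IdentDistrib (fun ω => X ω * log (X ω)) (fun ω => Y ω * log (Y ω)) μ ν :=
  h.comp measurable_mul_log

lemma IndepFun.integral_mul_mul_log {X Z : Ω → ℝ} (hXZ : IndepFun X Z μ)
    (hX : Integrable X μ) (hZ : Integrable Z μ)
    (hXlog : Integrable (fun ω => X ω * log (X ω)) μ)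
    (hZlog : Integrable (fun ω => Z ω * log (Z ω)) μ) :
    ∫ ω, X ω * Z ω * log (X ω * Z ω) ∂μ =
      (∫ ω, X ω * log (X ω) ∂μ) * ∫ ω, Z ω ∂μ + (∫ ω, X ω ∂μ) * ∫ ω, Z ω * log (Z ω) ∂μ := by
  have h₁ : IndepFun (fun ω => X ω * log (X ω)) Z μ := hXZ.comp measurable_mul_log measurable_id
  have h₂ : IndepFun X (fun ω => Z ω * log (Z ω)) μ := hXZ.comp measurable_id measurable_mul_log
  simp_rw [mul_mul_log_mul]
  have hint₁ : Integrable (fun ω => X ω * log (X ω) * Z ω) μ := h₁.integrable_mul hXlog hZ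
  have hint₂ : Integrable (fun ω => X ω * (Z ω * log (Z ω))) μ := h₂.integrable_mul hX hZlog
  rw [integral_add hint₁ hint₂,
    h₁.integral_fun_mul_eq_mul_integral hXlog.1 hZ.1,
    h₂.integral_fun_mul_eq_mul_integral hX.1 hZlog.1]

lemma IndepFun.integrable_mul_log_of_integrable_mul_mul_log [IsFiniteMeasure μ] {X Z : Ω → ℝ}
    (hXZ : IndepFun X Z μ) (hX : Integrable X μ) (hZ : AEMeasurable Z μ)
    (hZ₀ : μ {ω | Z ω ≠ 0} ≠ 0)
    (h : Integrable (fun ω => X ω * Z ω * log (X ω * Z ω)) μ) :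
    Integrable (fun ω => X ω * log (X ω)) μ := by
  set F : ℝ × ℝ → ℝ := fun p => p.1 * p.2 * log (p.1 * p.2)
  have hF : Measurable F := measurable_mul_log.comp (measurable_fst.mul measurable_snd)
  have hlaw : μ.map (fun ω => (X ω, Z ω)) = (μ.map X).prod (μ.map Z) :=
    (indepFun_iff_map_prod_eq_prod_map_map hX.aemeasurable hZ).1 hXZ
  have hFint : Integrable F ((μ.map X).prod (μ.map Z)) := by
    rwa [← hlaw, integrable_map_measure hF.aestronglyMeasurable (hX.aemeasurable.prodMk hZ)]
  have hZ₀' : ∃ᵐ z ∂(μ.map Z), z ≠ 0 := by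
    rw [frequently_ae_iff, Measure.map_apply_of_aemeasurable hZ]
    exacts [hZ₀, (measurableSet_singleton 0).compl]
  obtain ⟨z, hz, hslice⟩ := (hZ₀'.and_eventually hFint.prod_left_ae).exists
  have hid : Integrable id (μ.map X) :=
    (integrable_map_measure aestronglyMeasurable_id hX.aemeasurable).2 hX
  -- `x log x = z⁻¹ (F (x, z) - z log z · x)`
  have hmap : Integrable (fun x => x * log x) (μ.map X) := by
    refine ((hslice.sub (hid.const_mul (z * log z))).const_mul z⁻¹).congr (ae_of_all _ fun x => ?_)
    simp only [F, id, Pi.sub_apply, mul_mul_log_mul]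
    field_simp
    ring
  exact (integrable_map_measure measurable_mul_log.aestronglyMeasurable hX.aemeasurable).1 hmap

lemma IndepFun.integrable_mul_log_of_integral_eq_one [IsFiniteMeasure μ] {X Z : Ω → ℝ}
    (hXZ : IndepFun X Z μ) (hX : ∫ ω, X ω ∂μ = 1) (hZ : ∫ ω, Z ω ∂μ = 1)
    (h : Integrable (fun ω => X ω * Z ω * log (X ω * Z ω)) μ) :
    Integrable (fun ω => X ω * log (X ω)) μ :=
  hXZ.integrable_mul_log_of_integrable_mul_mul_log (.of_integral_ne_zero (by simp [hX]))
    (Integrable.of_integral_ne_zero (by simp [hZ])).aemeasurable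
    (measure_ne_zero_of_integral_ne_zero (by simp [hZ])) h

lemma IndepFun.integral_mul_mul_log_of_integral_eq_one [IsFiniteMeasure μ] {X Z : Ω → ℝ}
    (hXZ : IndepFun X Z μ) (hX : ∫ ω, X ω ∂μ = 1) (hZ : ∫ ω, Z ω ∂μ = 1)
    (h : Integrable (fun ω => X ω * Z ω * log (X ω * Z ω)) μ) :
    ∫ ω, X ω * Z ω * log (X ω * Z ω) ∂μ =
      ∫ ω, X ω * log (X ω) ∂μ + ∫ ω, Z ω * log (Z ω) ∂μ := by
  have hZlog := hXZ.symm.integrable_mul_log_of_integral_eq_one hZ hX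
    (by simpa only [mul_comm] using h)
  rw [hXZ.integral_mul_mul_log (.of_integral_ne_zero (by simp [hX]))
    (.of_integral_ne_zero (by simp [hZ])) (hXZ.integrable_mul_log_of_integral_eq_one hX hZ h)
    hZlog, hX, hZ, mul_one, one_mul]

end ProbabilityTheory

end

theorem stmt_19_general {Ω : Type*} [MeasurableSpace Ω] (μ : Measure Ω) [IsProbabilityMeasure μ]
    (ℓ : ℕ) (hℓ : 2 ≤ ℓ)
    (W Y : Ω → ℝ) (hWnn : ∀ ω, 0 ≤ W ω) (hYnn : ∀ ω, 0 ≤ Y ω)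
    (hWexp : ∫ ω, W ω ∂μ = 1) (hYexp : ∫ ω, Y ω ∂μ = 1)
    (Wf Zf : Fin ℓ → Ω → ℝ)
    (hind : iIndepFun (Sum.elim Wf Zf) μ)
    (hWd : ∀ j, IdentDistrib (Wf j) W μ μ)
    (hZd : ∀ j, IdentDistrib (Zf j) Y μ μ)
    (heq : IdentDistrib (fun ω => (ℓ : ℝ) * Y ω) (fun ω => ∑ j, Wf j ω * Zf j ω) μ μ)
    (hWYlog : ∀ j, Integrable (fun ω => Wf j ω * Zf j ω * Real.log (Wf j ω * Zf j ω)) μ) :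
    Integrable (fun ω => W ω * Real.log (W ω)) μ ∧
    ∫ ω, W ω * Real.log (W ω) ∂μ < Real.log ℓ := by
  have : Nontrivial (Fin ℓ) := Fin.nontrivial_iff_two_le.2 hℓ
  obtain ⟨j₀⟩ : Nonempty (Fin ℓ) := inferInstance
  have hWf (j) : ∫ ω, Wf j ω ∂μ = 1 := (hWd j).integral_eq.trans hWexp
  have hZf (j) : ∫ ω, Zf j ω ∂μ = 1 := (hZd j).integral_eq.trans hYexp
  have hWZ (j) : IndepFun (Wf j) (Zf j) μ := hind.indepFun Sum.inl_ne_inr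
  have hYlog : Integrable (fun ω => Y ω * log (Y ω)) μ :=
    (hZd j₀).mul_log.integrable_iff.1 <| (hWZ j₀).symm.integrable_mul_log_of_integral_eq_one
      (hZf j₀) (hWf j₀) (by simpa only [mul_comm] using hWYlog j₀)
  refine ⟨(hWd j₀).mul_log.integrable_iff.1 <|
    (hWZ j₀).integrable_mul_log_of_integral_eq_one (hWf j₀) (hZf j₀) (hWYlog j₀), ?_⟩
  have hnn (j) : 0 ≤ᵐ[μ] fun ω => Wf j ω * Zf j ω := by
    filter_upwards [(hWd j).symm.ae_snd measurableSet_Ici (ae_of_all _ hWnn),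
      (hZd j).symm.ae_snd measurableSet_Ici (ae_of_all _ hYnn)] with ω hW hZ
    exact mul_nonneg hW hZ
  have hYint : Integrable Y μ := .of_integral_ne_zero (by simp [hYexp])
  have hlt := integral_sum_mul_log_lt hnn hWYlog
    (heq.mul_log.integrable_iff.1 (hYint.const_mul_mul_log ℓ hYlog))
    (hind.measure_forall_mul_ne_zero (fun j => measure_ne_zero_of_integral_ne_zero (by simp [hWf]))
      (fun j => measure_ne_zero_of_integral_ne_zero (by simp [hZf])))
  rw [integral_finsetSum _ fun j _ => hWYlog j, ← heq.mul_log.integral_eq,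
    integral_const_mul_mul_log _ hYint hYlog, hYexp] at hlt
  simp only [(hWZ _).integral_mul_mul_log_of_integral_eq_one (hWf _) (hZf _) (hWYlog _),
    (hWd _).mul_log.integral_eq, (hZd _).mul_log.integral_eq, sum_const, card_univ,
    Fintype.card_fin, nsmul_eq_mul] at hlt
  exact lt_of_mul_lt_mul_left (a := (ℓ : ℝ)) (by linarith) ℓ.cast_nonneg

theorem stmt_19 {Ω : Type*} [MeasurableSpace Ω] (μ : Measure Ω) [IsProbabilityMeasure μ]
    (ℓ : ℕ) (hℓ : 2 ≤ ℓ)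
    (W Y : Ω → ℝ) (hWnn : ∀ ω, 0 ≤ W ω) (hYnn : ∀ ω, 0 ≤ Y ω)
    (hWexp : ∫ ω, W ω ∂μ = 1) (hYint : Integrable Y μ) (hYexp : ∫ ω, Y ω ∂μ = 1)
    (hYlog : Integrable (fun ω => Y ω * Real.log (Y ω)) μ)
    (hYlogpos : 0 < ∫ ω, Y ω * Real.log (Y ω) ∂μ)
    (Wf Zf : Fin ℓ → Ω → ℝ)
    (hind : iIndepFun (Sum.elim Wf Zf) μ)
    (hWd : ∀ j, IdentDistrib (Wf j) W μ μ)
    (hZd : ∀ j, IdentDistrib (Zf j) Y μ μ)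
    (heq : IdentDistrib (fun ω => (ℓ : ℝ) * Y ω) (fun ω => ∑ j, Wf j ω * Zf j ω) μ μ)
    (hWYlog : ∀ j, Integrable (fun ω => Wf j ω * Zf j ω * Real.log (Wf j ω * Zf j ω)) μ) :
    Integrable (fun ω => W ω * Real.log (W ω)) μ ∧
    ∫ ω, W ω * Real.log (W ω) ∂μ < Real.log ℓ :=
  stmt_19_general μ ℓ hℓ W Y hWnn hYnn hWexp hYexp Wf Zf hind hWd hZd heq hWYlog
end
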